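/- arXiv:2305.02570 — 6 statements merged into one kernel-verified Lean document; each statement's English description precedes it below -/
import Mathlib

section
/- For every finite simple graph G without isolated vertices, the conflict-free closed neighborhood chromatic number of G is at most twice its conflict-free open neighborhood chromatic number: χ_CN(G) ≤ 2·χ_ON(G). -/
open Finset

/-- `f` is a CFON coloring of `G`: every vertex has a color appearing
exactly once in its open neighborhood. -/
def IsCFONColoring {V : Type} (G : SimpleGraph V) {k : ℕ} (f : V → Fin k) : Prop :=
  ∀ v : V, ∃ c : Fin k, ∃! u : V, u ∈ G.neighborSet v ∧ f u = c

/-- `f` is a CFCN coloring of `G`: every vertex has a color appearing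
exactly once in its closed neighborhood. -/
def IsCFCNColoring {V : Type} (G : SimpleGraph V) {k : ℕ} (f : V → Fin k) : Prop :=
  ∀ v : V, ∃ c : Fin k, ∃! u : V, u ∈ insert v (G.neighborSet v) ∧ f u = c

/-- The CFON chromatic number of `G`. -/
noncomputable def chiON {V : Type} [Fintype V] (G : SimpleGraph V) : ℕ :=
  sInf {k : ℕ | ∃ f : V → Fin k, IsCFONColoring G f}

/-- The CFCN chromatic number of `G`. -/
noncomputable def chiCN {V : Type} [Fintype V] (G : SimpleGraph V) : ℕ :=
  sInf {k : ℕ | ∃ f : V → Fin k, IsCFCNColoring G f}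

theorem cfcn_le_two_mul_cfon {V : Type} [Fintype V] (G : SimpleGraph V)
    (h : ∀ v : V, ∃ u : V, G.Adj v u) :
    chiCN G ≤ 2 * chiON G := by
  classical
  -- The CFON set is nonempty (injective coloring works)
  have hne : {k : ℕ | ∃ f : V → Fin k, IsCFONColoring G f}.Nonempty := by
    refine ⟨Fintype.card V, fun v => Fintype.equivFin V v, fun v => ?_⟩
    obtain ⟨u, hu⟩ := h v
    refine ⟨Fintype.equivFin V u, u, ⟨hu, rfl⟩, ?_⟩
    rintro x ⟨hx, hfx⟩
    exact (Fintype.equivFin V).injective hfx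
  have hmem : chiON G ∈ {k : ℕ | ∃ f : V → Fin k, IsCFONColoring G f} :=
    Nat.sInf_mem hne
  obtain ⟨f, hf⟩ := hmem
  -- choose witness function
  have hf' : ∀ v : V, ∃ u : V, (u ∈ G.neighborSet v) ∧
      ∀ x : V, x ∈ G.neighborSet v → f x = f u → x = u := by
    intro v
    obtain ⟨c, u, ⟨hu1, hu2⟩, hu3⟩ := hf v
    exact ⟨u, hu1, fun x hx hfx => hu3 x ⟨hx, hfx.trans hu2⟩⟩
  choose W Wadj Wuniq using hf'
  have Wadj' : ∀ v, G.Adj v (W v) := fun v => Wadj v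
  have Wne : ∀ v, v ≠ W v := fun v => (Wadj' v).ne
  -- bad vertices
  let bad : V → Prop := fun v => f v = f (W v)
  let e := Fintype.equivFin V
  let b : V → Bool := fun v => decide (bad v ∧ (¬ bad (W v) ∨ e v < e (W v)))
  -- mutual pairing
  have mutual_lem : ∀ v, bad v → bad (W v) → W (W v) = v := by
    intro v hv hWv
    have : f v = f (W (W v)) := hv.trans hWv
    exact (Wuniq (W v) v ((Wadj' v).symm) this).symm
  have bspec : ∀ w, (b w = true) ↔ (bad w ∧ (¬ bad (W w) ∨ e w < e (W w))) := by
    intro w; simp [b]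
  have bneq : ∀ v, bad v → b v ≠ b (W v) := by
    intro v hv hEq
    by_cases hWv : bad (W v)
    · have hm := mutual_lem v hv hWv
      have h1 : b v = true ↔ e v < e (W v) := by
        rw [bspec]; tauto
      have h2 : b (W v) = true ↔ e (W v) < e v := by
        rw [bspec, hm]; tauto
      have hne' : e v ≠ e (W v) := fun hE => Wne v (e.injective hE)
      rcases lt_trichotomy (e v) (e (W v)) with hlt | heq | hgt
      · exact absurd (h2.mp (hEq ▸ h1.mpr hlt)) (lt_asymm hlt)
      · exact hne' heq
      · exact absurd (h1.mp (hEq.symm ▸ h2.mpr hgt)) (lt_asymm hgt)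
    · have h1 : b v = true := (bspec v).mpr ⟨hv, Or.inl hWv⟩
      have h2 : b (W v) ≠ true := fun ht => hWv ((bspec (W v)).mp ht).1
      exact h2 (hEq ▸ h1)
  -- the CFCN coloring with 2k colors
  have hkpos : ∀ v : V, (f v).val < chiON G := fun v => (f v).isLt
  let g : V → Fin (2 * chiON G) := fun v =>
    ⟨(f v).val + (if b v then chiON G else 0), by have := (f v).isLt; split <;> omega⟩
  have gval : ∀ v, (g v).val = (f v).val + (if b v then chiON G else 0) := fun v => rfl
  have ginj : ∀ x y : V, g x = g y → f x = f y ∧ b x = b y := by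
    intro x y hxy
    have hval : (f x).val + (if b x then chiON G else 0) = (f y).val + (if b y then chiON G else 0) := by
      have := congrArg Fin.val hxy
      simpa [gval] using this
    have hx := (f x).isLt
    have hy := (f y).isLt
    cases hbx : b x <;> cases hby : b y <;> simp [hbx, hby] at hval ⊢ <;>
      first
        | exact Fin.ext (by omega)
        | omega
  have hCFCN : IsCFCNColoring G g := by
    intro v
    refine ⟨g (W v), W v, ⟨Set.mem_insert_of_mem _ (Wadj v), rfl⟩, ?_⟩
    rintro x ⟨hx, hgx⟩
    obtain ⟨hfx, hbx⟩ := ginj x (W v) hgx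
    rcases Set.mem_insert_iff.mp hx with hxv | hxN
    · subst hxv
      exact absurd hbx (bneq x hfx)
    · exact Wuniq v x hxN hfx
  have hmem2 : 2 * chiON G ∈ {m : ℕ | ∃ f : V → Fin m, IsCFCNColoring G f} := ⟨g, hCFCN⟩
  exact Nat.sInf_le hmem2
end

section
/- Let H = (V, E) be a finite hypergraph with maximum degree Δ, i.e., every vertex lies in at most Δ hyperedges, and assume every hyperedge is nonempty. Then H admits a conflict-free coloring using at most Δ + 1 colors. -/
open Finset in
theorem hypergraph_cf_aux {V : Type} [Fintype V] [DecidableEq V] (Δ : ℕ) :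
    ∀ (S : Finset V) (𝓔 : Finset (Finset V)),
    (∀ E ∈ 𝓔, E.Nonempty) →
    (∀ v : V, (𝓔.filter (fun E => v ∈ E)).card ≤ Δ) →
    (∀ E ∈ 𝓔, E ⊆ S) →
    ∃ f : V → Fin (Δ + 1), ∀ E ∈ 𝓔, ∃ c : Fin (Δ + 1), ∃! u : V, u ∈ E ∧ f u = c := by
  classical
  intro S
  induction S using Finset.strongInduction with
  | _ S ih =>
    intro 𝓔 hne hdeg hsub
    rcases 𝓔.eq_empty_or_nonempty with rfl | ⟨E₀, hE₀⟩
    · exact ⟨fun _ => 0, by simp⟩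
    obtain ⟨v, hv⟩ := hne E₀ hE₀
    have hvS : v ∈ S := hsub E₀ hE₀ hv
    set 𝓔' : Finset (Finset V) :=
      (𝓔.image (fun E => E.erase v)).filter (fun E => E.Nonempty) with h𝓔'
    have hmem' : ∀ E' : Finset V,
        E' ∈ 𝓔' ↔ (∃ E ∈ 𝓔, E.erase v = E') ∧ E'.Nonempty := by
      intro E'; simp [h𝓔', Finset.mem_filter, Finset.mem_image]
    obtain ⟨f', hf'⟩ := ih (S.erase v) (Finset.erase_ssubset hvS) 𝓔'
      (fun E hE => ((hmem' E).mp hE).2)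
      (by
        intro u
        calc (𝓔'.filter (fun E => u ∈ E)).card
            ≤ ((𝓔.filter (fun E => u ∈ E)).image (fun E => E.erase v)).card := by
              apply Finset.card_le_card
              intro E' hE'
              rw [Finset.mem_filter] at hE'
              obtain ⟨⟨E, hE, rfl⟩, _⟩ := (hmem' E').mp hE'.1
              exact Finset.mem_image_of_mem _
                (Finset.mem_filter.mpr ⟨hE, Finset.mem_of_mem_erase hE'.2⟩)
          _ ≤ (𝓔.filter (fun E => u ∈ E)).card := Finset.card_image_le
          _ ≤ Δ := hdeg u)
      (by
        intro E' hE'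
        obtain ⟨⟨E, hE, rfl⟩, _⟩ := (hmem' E').mp hE'
        exact Finset.erase_subset_erase v (hsub E hE))
    -- choose a witness color for each edge through v
    set g : Finset V → Fin (Δ + 1) :=
      fun E => if h : E.erase v ∈ 𝓔' then (hf' _ h).choose else 0 with hg
    set B : Finset (Fin (Δ + 1)) := (𝓔.filter (fun E => v ∈ E)).image g with hB
    have hBcard : B.card < Δ + 1 :=
      lt_of_le_of_lt (le_trans Finset.card_image_le (hdeg v)) (Nat.lt_succ_self Δ)
    have hBne : B ≠ Finset.univ := by
      intro h
      rw [h, Finset.card_univ, Fintype.card_fin] at hBcard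
      exact lt_irrefl _ hBcard
    obtain ⟨k, hk⟩ : ∃ k, k ∉ B := by
      by_contra h
      push_neg at h
      exact hBne (Finset.eq_univ_iff_forall.mpr h)
    refine ⟨Function.update f' v k, ?_⟩
    intro E hE
    by_cases hvE : v ∈ E
    · by_cases hEe : (E.erase v).Nonempty
      · have hE' : E.erase v ∈ 𝓔' := (hmem' _).mpr ⟨⟨E, hE, rfl⟩, hEe⟩
        have hgE : g E = (hf' _ hE').choose := by rw [hg]; simp [hE']
        have hspec : ∃! u : V, u ∈ E.erase v ∧ f' u = g E := by
          rw [hgE]; exact (hf' _ hE').choose_spec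
        obtain ⟨u, ⟨huE, hfu⟩, huniq⟩ := hspec
        have hkg : k ≠ g E := by
          intro h
          exact hk (h ▸ Finset.mem_image_of_mem g (Finset.mem_filter.mpr ⟨hE, hvE⟩))
        have huv : u ≠ v := Finset.ne_of_mem_erase huE
        refine ⟨g E, u, ⟨Finset.mem_of_mem_erase huE, by
          rw [Function.update_of_ne huv]; exact hfu⟩, ?_⟩
        intro w ⟨hwE, hwc⟩
        by_cases hwv : w = v
        · subst hwv
          rw [Function.update_self] at hwc
          exact absurd hwc hkg
        · rw [Function.update_of_ne hwv] at hwc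
          exact huniq w ⟨Finset.mem_erase.mpr ⟨hwv, hwE⟩, hwc⟩
      · have hEv : E = {v} := by
          apply Finset.eq_singleton_iff_unique_mem.mpr
          refine ⟨hvE, fun w hw => ?_⟩
          by_contra h
          exact hEe ⟨w, Finset.mem_erase.mpr ⟨h, hw⟩⟩
        refine ⟨k, v, ⟨hvE, Function.update_self _ _ _⟩, ?_⟩
        intro w ⟨hwE, _⟩
        rw [hEv] at hwE
        exact Finset.mem_singleton.mp hwE
    · have hE' : E ∈ 𝓔' := (hmem' E).mpr ⟨⟨E, hE, Finset.erase_eq_of_notMem hvE⟩, hne E hE⟩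
      obtain ⟨c, u, ⟨huE, hfu⟩, huniq⟩ := hf' E hE'
      have huv : u ≠ v := fun h => hvE (h ▸ huE)
      refine ⟨c, u, ⟨huE, by rw [Function.update_of_ne huv]; exact hfu⟩, ?_⟩
      intro w ⟨hwE, hwc⟩
      have hwv : w ≠ v := fun h => hvE (h ▸ hwE)
      rw [Function.update_of_ne hwv] at hwc
      exact huniq w ⟨hwE, hwc⟩

/-- A hypergraph with maximum degree `Δ` and nonempty hyperedges admits a
conflict-free coloring with `Δ + 1` colors. -/
theorem hypergraph_cf_coloring_maxDegree {V : Type} [Fintype V] [DecidableEq V]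
    (𝓔 : Finset (Finset V)) (Δ : ℕ)
    (hne : ∀ E ∈ 𝓔, E.Nonempty)
    (hdeg : ∀ v : V, (𝓔.filter (fun E => v ∈ E)).card ≤ Δ) :
    ∃ f : V → Fin (Δ + 1), ∀ E ∈ 𝓔, ∃ c : Fin (Δ + 1), ∃! u : V, u ∈ E ∧ f u = c := by
  exact hypergraph_cf_aux Δ Finset.univ 𝓔 hne hdeg (fun E _ => Finset.subset_univ E)
end

section
/- Let H = (V, E) be a finite hypergraph such that (i) every hyperedge intersects at most Γ other hyperedges, and (ii) every hyperedge E satisfies r ≤ |E| ≤ ℓ·r, where ℓ ≥ 1 is an integer and r ≥ 2·log₂(4Γ). Then H admits a conflict-free coloring with at most e·ℓ·r colors, where e is the base of the natural logarithm. -/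
/-!
Colour the vertices uniformly at random with `k = ⌊e ℓ r⌋` colours. A colouring that is not
conflict-free on an edge `E` with `s` vertices uses every colour of `E` at least twice, so the
colours of `E` lie in some `⌊s/2⌋`-subset of the palette; hence this bad event has probability at
most `C(k, ⌊s/2⌋) (⌊s/2⌋ / k)^s`, which `s ≤ ℓ r ≤ (k + 1) / e` and `4Γ ≤ 2^(s/2)` bound by
`1 / (e (Γ + 1))`. The bad event of `E` depends only on the colours of `E`, so it is independent
of any combination of the events of edges disjoint from `E`, and the symmetric Lovász Local
Lemma for the uniform distribution on colourings yields a colouring avoiding all bad events.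
-/

open Finset Real
open scoped Nat

theorem pow_self_mul_exp_one_le_exp_one_pow_mul_factorial {m : ℕ} (hm : 1 ≤ m) :
    (m : ℝ) ^ m * exp 1 ≤ exp 1 ^ m * m ! := by
  induction m, hm using Nat.le_induction with
  | base => simp
  | succ m hm ih =>
    have hm0 : (m : ℝ) ≠ 0 := by positivity
    calc ((m + 1 : ℕ) : ℝ) ^ (m + 1) * exp 1
        = (m + 1) * ((m : ℝ) ^ m * (1 + (m : ℝ)⁻¹) ^ m) * exp 1 := by
          push_cast; rw [← mul_pow, mul_add, mul_inv_cancel₀ hm0, mul_one]; ring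
      _ ≤ (m + 1) * ((m : ℝ) ^ m * exp 1) * exp 1 := by gcongr; exact one_add_inv_pow_le_exp
      _ ≤ (m + 1) * (exp 1 ^ m * m !) * exp 1 := by gcongr
      _ = exp 1 ^ (m + 1) * (m + 1)! := by push_cast [Nat.factorial_succ]; ring

theorem choose_mul_pow_self_mul_exp_one_le {k m : ℕ} (hm : 1 ≤ m) :
    (k.choose m : ℝ) * m ^ m * exp 1 ≤ (exp 1 * k) ^ m := by
  calc (k.choose m : ℝ) * m ^ m * exp 1
      ≤ (k : ℝ) ^ m / m ! * (exp 1 ^ m * m !) := by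
        rw [mul_assoc]
        exact mul_le_mul (Nat.choose_le_pow_div m k)
          (pow_self_mul_exp_one_le_exp_one_pow_mul_factorial hm) (by positivity) (by positivity)
    _ = (exp 1 * k) ^ m := by field_simp; ring

theorem add_one_pow_le_two_mul_pow {a : ℝ} {m : ℕ} (ha : 2 * m ≤ a) :
    (a + 1) ^ m ≤ 2 * a ^ m := by
  rcases Nat.eq_zero_or_pos m with rfl | hm
  · norm_num
  have ha0 : 0 < a := by
    have : (1 : ℝ) ≤ m := by exact_mod_cast hm
    linarith
  have hexp_half : exp (1 / 2) ≤ 2 := by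
    have h : exp (1 / 2) ^ 2 = exp 1 := by rw [← exp_nat_mul]; norm_num
    nlinarith [exp_one_lt_d9, exp_pos (1 / 2)]
  calc (a + 1) ^ m = a ^ m * (1 + a⁻¹) ^ m := by
        rw [← mul_pow, mul_add, mul_inv_cancel₀ ha0.ne', mul_one]
    _ ≤ a ^ m * exp a⁻¹ ^ m := by
        gcongr; linarith [add_one_le_exp a⁻¹]
    _ = a ^ m * exp (m / a) := by rw [← exp_nat_mul, div_eq_mul_inv]
    _ ≤ a ^ m * exp (1 / 2) := by
        gcongr _ * exp ?_; rw [div_le_iff₀ ha0]; linarith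
    _ ≤ 2 * a ^ m := by nlinarith [pow_pos ha0 m]

theorem choose_half_mul_pow_mul_le_pow {k s Γ : ℕ} (hΓ : 1 ≤ Γ)
    (hΓs : 4 * Γ ≤ 2 ^ (s - s / 2)) (hk : exp 1 * s - 1 ≤ k) :
    (k.choose (s / 2) : ℝ) * (s / 2 : ℕ) ^ s * (exp 1 * (Γ + 1)) ≤ k ^ s := by
  set m := s / 2
  set t := s - m
  have ht : 2 ≤ t := by
    by_contra! h
    have : 2 ^ t ≤ 2 ^ 1 := Nat.pow_le_pow_right (by norm_num) (by omega)
    omega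
  have hm : 1 ≤ m := by omega
  have hst : s = m + t := by omega
  have htm : t = m + (t - m) := by omega
  have he : (2.7182818283 : ℝ) < exp 1 := exp_one_gt_d9
  have hM : (1 : ℝ) ≤ m := by exact_mod_cast hm
  have h2m : (2 * m : ℝ) ≤ s := by exact_mod_cast (show 2 * m ≤ s by omega)
  have hk2m : 2 * exp 1 * m - 1 ≤ k := by nlinarith
  -- the rounding loss in `k ≥ e s - 1` costs only a factor 2 here
  have hpow : (2 * exp 1 * m) ^ m ≤ 2 * (k : ℝ) ^ m := by
    calc (2 * exp 1 * m) ^ m = (2 * exp 1 * m - 1 + 1) ^ m := by ring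
      _ ≤ 2 * (2 * exp 1 * m - 1) ^ m := add_one_pow_le_two_mul_pow (by nlinarith)
      _ ≤ 2 * (k : ℝ) ^ m := by gcongr; nlinarith
  have hrest : (2 * m : ℝ) ^ (t - m) ≤ (k : ℝ) ^ (t - m) := by gcongr; nlinarith
  have hΓt : 2 * ((Γ : ℝ) + 1) ≤ 2 ^ t := by
    have : ((4 * Γ : ℕ) : ℝ) ≤ ((2 ^ t : ℕ) : ℝ) := by exact_mod_cast hΓs
    have : (1 : ℝ) ≤ Γ := by exact_mod_cast hΓ
    push_cast at *; linarith
  have hchoose := choose_mul_pow_self_mul_exp_one_le (k := k) hm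
  rw [← mul_le_mul_iff_of_pos_right (by positivity : (0 : ℝ) < 2 ^ t)]
  calc (k.choose m : ℝ) * (m : ℕ) ^ s * (exp 1 * (Γ + 1)) * 2 ^ t
      = ((k.choose m : ℝ) * m ^ m * exp 1) * (m ^ t * 2 ^ t) * (Γ + 1) := by
        rw [hst]; ring
    _ ≤ (exp 1 * k) ^ m * (m ^ t * 2 ^ t) * (Γ + 1) := by gcongr
    _ = (k : ℝ) ^ m * (2 * exp 1 * m) ^ m * (2 * m) ^ (t - m) * (Γ + 1) := by
        rw [htm]; simp only [Nat.add_sub_cancel_left]; ring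
    _ ≤ (k : ℝ) ^ m * (2 * (k : ℝ) ^ m) * (k : ℝ) ^ (t - m) * (Γ + 1) := by gcongr
    _ = (k : ℝ) ^ s * (2 * (Γ + 1)) := by
        rw [hst, htm]; simp only [Nat.add_sub_cancel_left]; ring
    _ ≤ (k : ℝ) ^ s * 2 ^ t := by gcongr

theorem le_two_pow_sub_half_of_two_mul_logb_le {a s : ℕ} (ha : 0 < a)
    (h : 2 * logb 2 a ≤ s) : a ≤ 2 ^ (s - s / 2) := by
  have hs : (s : ℝ) / 2 ≤ (s - s / 2 : ℕ) := by
    rw [Nat.cast_sub (Nat.div_le_self s 2)]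
    have : ((s / 2 : ℕ) : ℝ) ≤ s / 2 := Nat.cast_div_le
    linarith
  have := (logb_le_iff_le_rpow one_lt_two (by exact_mod_cast ha)).mp
    (by linarith : logb 2 a ≤ (s - s / 2 : ℕ))
  exact_mod_cast this

theorem one_le_exp_one_mul_div_add_one_pow (n : ℕ) : 1 ≤ exp 1 * ((n : ℝ) / (n + 1)) ^ n := by
  rcases Nat.eq_zero_or_pos n with rfl | hn
  · simp
  have hn0 : (n : ℝ) ≠ 0 := by positivity
  calc (1 : ℝ) = (1 + (n : ℝ)⁻¹) ^ n * ((n : ℝ) / (n + 1)) ^ n := by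
        rw [← mul_pow]; field_simp; simp
    _ ≤ exp 1 * ((n : ℝ) / (n + 1)) ^ n := by gcongr; exact one_add_inv_pow_le_exp

section LocalLemma

variable {Ω ι : Type*} [Fintype Ω] (Bad : ι → Ω → Prop) [∀ i, DecidablePred (Bad i)]

def avoiding (S : Finset ι) : Finset Ω := {ω | ∀ j ∈ S, ¬ Bad j ω}

variable {Bad}

theorem avoiding_anti {S T : Finset ι} (h : S ⊆ T) : avoiding Bad T ⊆ avoiding Bad S :=
  fun ω hω => by
    simp only [avoiding, mem_filter, mem_univ, true_and] at hω ⊢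
    exact fun j hj => hω j (h hj)

theorem card_filter_avoiding_mul_le_of_card_mul_card_eq [Nonempty Ω] {i : ι} {S : Finset ι}
    {c : ℝ} (hindep : #{ω ∈ avoiding Bad S | Bad i ω} * Fintype.card Ω =
      #{ω | Bad i ω} * #(avoiding Bad S))
    (hp : (#{ω | Bad i ω} : ℝ) * c ≤ Fintype.card Ω) :
    (#{ω ∈ avoiding Bad S | Bad i ω} : ℝ) * c ≤ #(avoiding Bad S) := by
  have h : (#{ω ∈ avoiding Bad S | Bad i ω} : ℝ) * Fintype.card Ω =
      #{ω | Bad i ω} * #(avoiding Bad S) := by exact_mod_cast hindep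
  have hΩ : (0 : ℝ) < Fintype.card Ω := by exact_mod_cast Fintype.card_pos
  rw [← mul_le_mul_iff_of_pos_right hΩ, mul_right_comm, h, mul_right_comm, mul_comm _ (_ : ℝ)]
  gcongr

variable [DecidableEq ι]

theorem card_avoiding_insert_add (j : ι) (S : Finset ι) :
    #(avoiding Bad (insert j S)) + #{ω ∈ avoiding Bad S | Bad j ω} = #(avoiding Bad S) := by
  have : avoiding Bad (insert j S) = {ω ∈ avoiding Bad S | ¬ Bad j ω} := by
    ext ω; simp only [avoiding, mem_filter, mem_univ, true_and, forall_mem_insert]; tauto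
  rw [this, add_comm, card_filter_add_card_filter_not]

theorem pow_mul_card_avoiding_le_card_avoiding_union {x : ℝ} (hx : x ≤ 1) (S T : Finset ι)
    (h : ∀ U ⊆ T, ∀ j ∈ T, j ∉ U →
      (#{ω ∈ avoiding Bad (S ∪ U) | Bad j ω} : ℝ) ≤ x * #(avoiding Bad (S ∪ U))) :
    (1 - x) ^ #T * #(avoiding Bad S) ≤ #(avoiding Bad (S ∪ T)) := by
  induction T using Finset.induction_on with
  | empty => simp
  | insert j T hjT ih =>
    have hrec := ih fun U hU k hk hkU =>
      h U (hU.trans (subset_insert j T)) k (mem_insert_of_mem hk) hkU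
    have hstep := h T (subset_insert j T) j (mem_insert_self j T) hjT
    have hcard : (#(avoiding Bad (S ∪ insert j T)) : ℝ) =
        #(avoiding Bad (S ∪ T)) - #{ω ∈ avoiding Bad (S ∪ T) | Bad j ω} := by
      rw [union_insert, ← card_avoiding_insert_add j (S ∪ T)]; push_cast; ring
    rw [card_insert_of_notMem hjT, hcard, pow_succ]
    nlinarith

variable [Nonempty Ω] {Adj : ι → ι → Prop} [DecidableRel Adj] {𝓔 : Finset ι} {Γ : ℕ}

theorem card_filter_avoiding_mul_le
    (hdeg : ∀ i ∈ 𝓔, #{j ∈ 𝓔 | j ≠ i ∧ Adj i j} ≤ Γ)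
    (hindep : ∀ i ∈ 𝓔, ∀ S ⊆ 𝓔, (∀ j ∈ S, ¬ Adj i j) →
      #{ω ∈ avoiding Bad S | Bad i ω} * Fintype.card Ω = #{ω | Bad i ω} * #(avoiding Bad S))
    (hp : ∀ i ∈ 𝓔, (#{ω | Bad i ω} : ℝ) * (exp 1 * (Γ + 1)) ≤ Fintype.card Ω)
    (S : Finset ι) (hS : S ⊆ 𝓔) (i : ι) (hi : i ∈ 𝓔) (hiS : i ∉ S) :
    (#{ω ∈ avoiding Bad S | Bad i ω} : ℝ) * (Γ + 1) ≤ #(avoiding Bad S) := by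
  induction S using Finset.strongInduction generalizing i with
  | H S ih =>
  -- Imposing the at most `Γ` events of `S` adjacent to `i` keeps a fraction at least
  -- `(Γ / (Γ + 1)) ^ Γ ≥ 1 / e` of the outcomes avoiding the others, which are independent of
  -- `Bad i`.
  set S₁ := {j ∈ S | Adj i j}
  set S₂ := {j ∈ S | ¬ Adj i j}
  have hS₂ : S₂ ⊆ S := filter_subset _ _
  have hΓpos : (0 : ℝ) < Γ + 1 := by positivity
  have hS₁ : #S₁ ≤ Γ := (card_le_card fun j hj => by
    obtain ⟨hjS, hij⟩ := mem_filter.mp hj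
    exact mem_filter.mpr ⟨hS hjS, fun h => hiS (h ▸ hjS), hij⟩).trans (hdeg i hi)
  have hchain : ((Γ : ℝ) / (Γ + 1)) ^ Γ * #(avoiding Bad S₂) ≤ #(avoiding Bad S) := by
    have key := pow_mul_card_avoiding_le_card_avoiding_union (Bad := Bad) (x := (Γ + 1)⁻¹)
      (inv_le_one_of_one_le₀ (le_add_of_nonneg_left Γ.cast_nonneg)) S₂ S₁
      fun U hU j hj hjU => by
        obtain ⟨hjS, hij⟩ := mem_filter.mp hj
        have hjS₂U : j ∉ S₂ ∪ U := by simp [S₂, hij, hjU]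
        have hsub : S₂ ∪ U ⊆ S := union_subset hS₂ (hU.trans (filter_subset _ _))
        rw [inv_mul_eq_div, le_div_iff₀ hΓpos]
        exact ih _ (ssubset_of_subset_of_ne hsub fun h => hjS₂U (h ▸ hjS)) (hsub.trans hS) j
          (hS hjS) hjS₂U
    rw [union_comm, filter_union_filter_not_eq,
      show 1 - ((Γ : ℝ) + 1)⁻¹ = Γ / (Γ + 1) by field_simp; ring] at key
    refine le_trans (mul_le_mul_of_nonneg_right ?_ (Nat.cast_nonneg _)) key
    exact pow_le_pow_of_le_one (by positivity) (div_le_one_of_le₀ (by linarith) hΓpos.le) hS₁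
  have hindep₂ := card_filter_avoiding_mul_le_of_card_mul_card_eq
    (hindep i hi S₂ (hS₂.trans hS) fun j hj => (mem_filter.mp hj).2) (hp i hi)
  calc (#{ω ∈ avoiding Bad S | Bad i ω} : ℝ) * (Γ + 1)
      ≤ #{ω ∈ avoiding Bad S₂ | Bad i ω} * (Γ + 1) * (exp 1 * ((Γ : ℝ) / (Γ + 1)) ^ Γ) := by
        rw [← mul_one ((#{ω ∈ avoiding Bad S | Bad i ω} : ℝ) * (Γ + 1))]
        gcongr
        · exact avoiding_anti hS₂
        · exact one_le_exp_one_mul_div_add_one_pow Γ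
    _ = #{ω ∈ avoiding Bad S₂ | Bad i ω} * (exp 1 * (Γ + 1)) * ((Γ : ℝ) / (Γ + 1)) ^ Γ := by
        ring
    _ ≤ #(avoiding Bad S₂) * ((Γ : ℝ) / (Γ + 1)) ^ Γ := by gcongr
    _ ≤ #(avoiding Bad S) := by rw [mul_comm]; exact hchain

theorem exists_forall_not_of_card_mul_le (hΓ : 1 ≤ Γ)
    (hdeg : ∀ i ∈ 𝓔, #{j ∈ 𝓔 | j ≠ i ∧ Adj i j} ≤ Γ)
    (hindep : ∀ i ∈ 𝓔, ∀ S ⊆ 𝓔, (∀ j ∈ S, ¬ Adj i j) →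
      #{ω ∈ avoiding Bad S | Bad i ω} * Fintype.card Ω = #{ω | Bad i ω} * #(avoiding Bad S))
    (hp : ∀ i ∈ 𝓔, (#{ω | Bad i ω} : ℝ) * (exp 1 * (Γ + 1)) ≤ Fintype.card Ω) :
    ∃ ω, ∀ i ∈ 𝓔, ¬ Bad i ω := by
  suffices ∀ S ⊆ 𝓔, (avoiding Bad S).Nonempty by
    obtain ⟨ω, hω⟩ := this 𝓔 subset_rfl
    exact ⟨ω, by simpa [avoiding] using hω⟩
  intro S
  induction S using Finset.induction_on with
  | empty => simp [avoiding]
  | insert i S hiS ih =>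
    intro hS
    have hpos := (ih ((subset_insert i S).trans hS)).card_pos
    have hbad : #{ω ∈ avoiding Bad S | Bad i ω} * (Γ + 1) ≤ #(avoiding Bad S) := by
      exact_mod_cast card_filter_avoiding_mul_le hdeg hindep hp S ((subset_insert i S).trans hS)
        i (hS (mem_insert_self i S)) hiS
    have := card_avoiding_insert_add (Bad := Bad) i S
    rw [← card_pos]
    nlinarith

end LocalLemma

section Product

variable {V κ : Type*} [Fintype V] [DecidableEq V] [Fintype κ]

theorem card_filter_and_mul_card_eq_of_dependsOn (A : Finset V) {P Q : (V → κ) → Prop}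
    [DecidablePred P] [DecidablePred Q] (hP : DependsOn P A) (hQ : DependsOn Q (↑A)ᶜ) :
    #{f | P f ∧ Q f} * Fintype.card (V → κ) = #{f | P f} * #{f | Q f} := by
  let swap : (V → κ) × (V → κ) → (V → κ) × (V → κ) := fun p =>
    (A.piecewise p.1 p.2, A.piecewise p.2 p.1)
  have hswap : ∀ p, swap (swap p) = p := fun p => by
    ext v <;> by_cases hv : v ∈ A <;> simp [swap, hv]
  have hP' : ∀ p, P (swap p).1 ↔ P p.1 := fun p =>
    iff_of_eq (hP fun v hv => by simp [swap, Finset.mem_coe.mp hv])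
  have hQ' : ∀ p, Q (swap p).2 ↔ Q p.1 := fun p =>
    iff_of_eq (hQ fun v hv => by simp [swap, show v ∉ A from hv])
  rw [← card_univ, ← card_product, ← card_product]
  refine card_nbij' swap swap (fun p hp => ?_) (fun p hp => ?_) (fun p _ => hswap p)
    (fun p _ => hswap p)
  all_goals simp only [coe_product, coe_filter, mem_univ, true_and, Set.mem_prod,
    Set.mem_ofPred_eq, coe_univ, Set.mem_univ, and_true] at hp ⊢
  · exact ⟨(hP' p).mpr hp.1, (hQ' p).mpr hp.2⟩
  · exact ⟨(hP' p).mpr hp.1, (hQ' (swap p)).mp (by rw [hswap]; exact hp.2)⟩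

theorem card_filter_avoiding_mul_card_eq {ι : Type*} {Bad : ι → (V → κ) → Prop}
    [∀ i, DecidablePred (Bad i)] {supp : ι → Finset V} (hBad : ∀ i, DependsOn (Bad i) (supp i))
    {i : ι} {S : Finset ι} (hS : ∀ j ∈ S, Disjoint (supp i) (supp j)) :
    #{f ∈ avoiding Bad S | Bad i f} * Fintype.card (V → κ) =
      #{f | Bad i f} * #(avoiding Bad S) := by
  have hQ : DependsOn (fun f => ∀ j ∈ S, ¬ Bad j f) (↑(supp i))ᶜ := fun f g hfg => by
    refine propext <| forall₂_congr fun j hj => not_congr <| iff_of_eq <|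
      hBad j fun v hv => hfg v ?_
    exact fun hvi => disjoint_left.mp (hS j hj) hvi hv
  rw [avoiding, filter_filter, ← card_filter_and_mul_card_eq_of_dependsOn (supp i) (hBad i) hQ]
  simp only [and_comm]

end Product

section ConflictFree

variable {V κ : Type*}

def IsConflictFreeOn (f : V → κ) (E : Finset V) : Prop :=
  ∃ c, ∃! u, u ∈ E ∧ f u = c

theorem IsConflictFreeOn.dependsOn (E : Finset V) :
    DependsOn (fun f : V → κ => IsConflictFreeOn f E) E := by
  intro f g hfg
  have key : ∀ c u, (u ∈ E ∧ f u = c) ↔ (u ∈ E ∧ g u = c) := fun c u =>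
    ⟨fun ⟨hu, h⟩ => ⟨hu, (hfg u hu).symm.trans h⟩, fun ⟨hu, h⟩ => ⟨hu, (hfg u hu).trans h⟩⟩
  simp only [IsConflictFreeOn, key]

theorem two_mul_card_image_le_of_not_isConflictFreeOn [DecidableEq κ] {f : V → κ}
    {E : Finset V} (hf : ¬ IsConflictFreeOn f E) : 2 * #(E.image f) ≤ #E := by
  have hfiber : ∀ c ∈ E.image f, 2 ≤ #{u ∈ E | f u = c} := by
    intro c hc
    obtain ⟨u, hu, rfl⟩ := mem_image.mp hc
    by_contra! hlt
    have hpos : 0 < #{v ∈ E | f v = f u} := card_pos.mpr ⟨u, mem_filter.mpr ⟨hu, rfl⟩⟩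
    obtain ⟨w, hw⟩ := card_eq_one.mp (by omega : #{v ∈ E | f v = f u} = 1)
    have hmem : ∀ v, v ∈ E ∧ f v = f u ↔ v = w := fun v => by
      rw [← mem_singleton (a := w), ← hw, mem_filter]
    exact hf ⟨f u, w, (hmem w).mpr rfl, fun v hv => (hmem v).mp hv⟩
  calc 2 * #(E.image f) = ∑ _c ∈ E.image f, 2 := by rw [sum_const, smul_eq_mul, mul_comm]
    _ ≤ ∑ c ∈ E.image f, #{u ∈ E | f u = c} := sum_le_sum hfiber
    _ = #E := (card_eq_sum_card_image f E).symm

variable [Fintype V] [DecidableEq V] [Fintype κ] [DecidableEq κ]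

theorem card_filter_forall_mem_subset (E : Finset V) (T : Finset κ) :
    #{f : V → κ | ∀ v ∈ E, f v ∈ T} = #T ^ #E * Fintype.card κ ^ (Fintype.card V - #E) := by
  have : ({f : V → κ | ∀ v ∈ E, f v ∈ T} : Finset _) =
      Fintype.piFinset fun v => if v ∈ E then T else univ := by
    ext f
    simp only [mem_filter, mem_univ, true_and, Fintype.mem_piFinset]
    exact ⟨fun h v => by split_ifs with hv <;> simp [h, hv],
      fun h v hv => by simpa [hv] using h v⟩
  rw [this, Fintype.card_piFinset]
  simp only [apply_ite card]
  rw [prod_ite, prod_const, prod_const, ← compl_filter, card_compl]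
  simp

theorem card_filter_not_isConflictFreeOn_le (E : Finset V)
    [DecidablePred fun f : V → κ => IsConflictFreeOn f E] (hE : #E / 2 ≤ Fintype.card κ) :
    #{f : V → κ | ¬ IsConflictFreeOn f E} ≤ (Fintype.card κ).choose (#E / 2) *
      ((#E / 2) ^ #E * Fintype.card κ ^ (Fintype.card V - #E)) := by
  calc #{f : V → κ | ¬ IsConflictFreeOn f E}
      ≤ #((powersetCard (#E / 2) univ).biUnion fun T => {f : V → κ | ∀ v ∈ E, f v ∈ T}) := by
        refine card_le_card fun f hf => ?_
        have himage := two_mul_card_image_le_of_not_isConflictFreeOn (mem_filter.mp hf).2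
        obtain ⟨T, hfT, -, hT⟩ := exists_subsuperset_card_eq (n := #E / 2)
          (subset_univ (E.image f)) (by omega) (by simpa using hE)
        exact mem_biUnion.mpr ⟨T, mem_powersetCard.mpr ⟨subset_univ T, hT⟩,
          mem_filter.mpr ⟨mem_univ f, fun v hv => hfT (mem_image_of_mem f hv)⟩⟩
    _ ≤ ∑ T ∈ powersetCard (#E / 2) univ, #{f : V → κ | ∀ v ∈ E, f v ∈ T} := card_biUnion_le
    _ = _ := by
        rw [sum_congr rfl fun T hT => by
          rw [card_filter_forall_mem_subset, (mem_powersetCard.mp hT).2], sum_const,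
          card_powersetCard, card_univ, smul_eq_mul]

theorem card_filter_not_isConflictFreeOn_mul_le (E : Finset V)
    [DecidablePred fun f : V → κ => IsConflictFreeOn f E] {Γ : ℕ} (hΓ : 1 ≤ Γ)
    (hΓE : 4 * Γ ≤ 2 ^ (#E - #E / 2)) (hκ : exp 1 * #E - 1 ≤ Fintype.card κ) :
    (#{f : V → κ | ¬ IsConflictFreeOn f E} : ℝ) * (exp 1 * (Γ + 1)) ≤
      Fintype.card (V → κ) := by
  set k := Fintype.card κ
  set n := Fintype.card V
  have hE : 1 ≤ #E := Nat.pos_of_ne_zero fun h => by simp [h] at hΓE; omega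
  have hEk : #E / 2 ≤ k := by
    have : (1 : ℝ) ≤ #E := by exact_mod_cast hE
    have : (#E : ℝ) ≤ k := by nlinarith [exp_one_gt_d9]
    exact (Nat.div_le_self _ _).trans (by exact_mod_cast this)
  have hcount : (#{f : V → κ | ¬ IsConflictFreeOn f E} : ℝ) ≤
      k.choose (#E / 2) * ((#E / 2 : ℕ) ^ #E * k ^ (n - #E)) := by
    exact_mod_cast card_filter_not_isConflictFreeOn_le E hEk
  have hsplit : (Fintype.card (V → κ) : ℝ) = k ^ #E * k ^ (n - #E) := by
    rw [Fintype.card_fun, ← pow_add, Nat.add_sub_cancel' (card_le_univ E)]; push_cast; rfl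
  rw [hsplit]
  calc (#{f : V → κ | ¬ IsConflictFreeOn f E} : ℝ) * (exp 1 * (Γ + 1))
      ≤ k.choose (#E / 2) * ((#E / 2 : ℕ) ^ #E * k ^ (n - #E)) * (exp 1 * (Γ + 1)) := by
        gcongr
    _ = (k.choose (#E / 2) * (#E / 2 : ℕ) ^ #E * (exp 1 * (Γ + 1))) * k ^ (n - #E) := by ring
    _ ≤ k ^ #E * k ^ (n - #E) := by gcongr; exact choose_half_mul_pow_mul_le_pow hΓ hΓE hκ

end ConflictFree

/-- A near-uniform hypergraph in which every hyperedge meets at most `Γ` other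
hyperedges and every hyperedge `E` satisfies `r ≤ |E| ≤ ℓ·r` with
`r ≥ 2·log₂(4Γ)` admits a conflict-free coloring with at most `e·ℓ·r` colors. -/
theorem hypergraph_cf_coloring_near_uniform {V : Type} [Fintype V] [DecidableEq V]
    (𝓔 : Finset (Finset V)) (Γ ℓ : ℕ) (r : ℝ)
    (hΓ : 1 ≤ Γ) (hℓ : 1 ≤ ℓ)
    (hr : 2 * Real.logb 2 (4 * Γ) ≤ r)
    (hΓbound : ∀ E ∈ 𝓔, (𝓔.filter (fun F => F ≠ E ∧ (F ∩ E).Nonempty)).card ≤ Γ)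
    (hsize : ∀ E ∈ 𝓔, r ≤ (E.card : ℝ) ∧ (E.card : ℝ) ≤ ℓ * r) :
    ∃ f : V → Fin ⌊Real.exp 1 * ℓ * r⌋₊,
      ∀ E ∈ 𝓔, ∃ c : Fin ⌊Real.exp 1 * ℓ * r⌋₊, ∃! u : V, u ∈ E ∧ f u = c := by
  classical
  have hΓR : (1 : ℝ) ≤ Γ := by exact_mod_cast hΓ
  have hr4 : 4 ≤ r := by
    have : 2 ≤ logb 2 (4 * Γ) :=
      (le_logb_iff_rpow_le one_lt_two (by positivity)).mpr (by norm_num; linarith)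
    linarith
  have hk : exp 1 * ℓ * r - 1 ≤ ⌊exp 1 * ℓ * r⌋₊ := (Nat.sub_one_lt_floor _).le
  have : Nonempty (Fin ⌊exp 1 * ℓ * r⌋₊) := ⟨⟨0, Nat.floor_pos.mpr (by
    have : (4 : ℝ) ≤ ℓ * r := by nlinarith [(Nat.one_le_cast (α := ℝ)).mpr hℓ]
    nlinarith [mul_le_mul_of_nonneg_left this (exp_pos 1).le, exp_one_gt_d9])⟩⟩
  obtain ⟨f, hf⟩ := exists_forall_not_of_card_mul_le (Bad := fun E f => ¬ IsConflictFreeOn f E)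
    (Adj := fun E F => (F ∩ E).Nonempty) hΓ hΓbound
    (fun E _ S _ hS => card_filter_avoiding_mul_card_eq
      (fun E f g hfg => congrArg Not (IsConflictFreeOn.dependsOn E hfg))
      fun F hF => disjoint_iff_inter_eq_empty.mpr (by
        rw [inter_comm]; exact not_nonempty_iff_eq_empty.mp (hS F hF)))
    fun E hE => by
      obtain ⟨hrE, hEℓ⟩ := hsize E hE
      refine card_filter_not_isConflictFreeOn_mul_le (κ := Fin ⌊exp 1 * ℓ * r⌋₊) E hΓ
        (le_two_pow_sub_half_of_two_mul_logb_le (by omega) (by push_cast; linarith)) ?_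
      rw [Fintype.card_fin]
      nlinarith [exp_pos 1]
  exact ⟨f, fun E hE => not_not.mp (hf E hE)⟩
end

section
/- Let G be a graph with maximum degree Δ such that every vertex has degree at least cΔ/ln^ε Δ, where c > 0 is a constant and ε ≥ 0 (Δ sufficiently large). Then χ_ON(G) = O(ln^{1+ε} Δ); specifically χ_ON(G) ≤ (490/c)·ln^{1+ε}(2Δ) + 1. -/
/-!
Colour every vertex independently: with probability `1 / (2Δ)` each by one of
`k = ⌊(490 / c) ln^{1+ε}(2Δ)⌋` real colours, and otherwise by one extra colour. A vertex `v`
is bad when no real colour occurs exactly once on `N(v)`. Since `𝟙[t ≠ 1] ≤ 𝔼 λ^t` for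
`λ = 2` with probability `1/5` and `λ = 1/2` with probability `4/5`, taking the product over the
colours and expanding it bounds `P(v bad)` by `((1/5) e^μ + (4/5) e^{-μ/2})^k ≤ e^{-μk/12}`,
where `μ = deg v / (2Δ) ≥ c / (2 ln^ε Δ)`. The event for `v` depends only on the colours of
`N(v)`, so it is independent of the events of all but `Δ² + 1` vertices, and `k` is chosen so
that `e · e^{-μk/12} · (Δ² + 2) ≤ 1`. The symmetric Lovász Local Lemma, proved here by counting
in the uniform space of colourings, yields a colouring without bad vertices; the extra colour
is the `(k+1)`-st colour of the CFON colouring.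
-/

open Finset

open Real Filter

section LovaszLocalLemma

variable {Ω ι : Type*} [Fintype Ω] [DecidableEq Ω] [DecidableEq ι] (A : ι → Finset Ω)

lemma card_compl_biUnion_insert_add (S : Finset ι) (i : ι) :
    #((insert i S).biUnion A)ᶜ + #(A i ∩ (S.biUnion A)ᶜ) = #(S.biUnion A)ᶜ := by
  rw [biUnion_insert, compl_union, inter_comm, ← card_sdiff_add_card_inter (S.biUnion A)ᶜ (A i),
    sdiff_eq_inter_compl, inter_comm (A i)]

variable {A} {x : ℝ}

lemma one_sub_pow_mul_card_compl_biUnion_le (hx : x ≤ 1) {R T : Finset ι} (hRT : Disjoint R T)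
    (hQ : ∀ S ⊂ R ∪ T, ∀ i, (#(A i ∩ (S.biUnion A)ᶜ) : ℝ) ≤ x * #(S.biUnion A)ᶜ) :
    (1 - x) ^ #T * #(R.biUnion A)ᶜ ≤ (#((R ∪ T).biUnion A)ᶜ : ℝ) := by
  induction T using Finset.induction_on with
  | empty => simp
  | insert j T hjT ih =>
    have hjRT : j ∉ R ∪ T := by
      simp [hjT, disjoint_insert_right.mp hRT |>.1]
    have hsub : R ∪ T ⊂ R ∪ insert j T := by
      rw [union_insert]; exact ssubset_insert hjRT
    have hstep := card_compl_biUnion_insert_add A (R ∪ T) j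
    have hj := hQ _ hsub j
    have ih' := ih (disjoint_insert_right.mp hRT).2 fun S hS => hQ S (hS.trans hsub)
    rw [card_insert_of_notMem hjT, union_insert]
    have h1x : 0 ≤ 1 - x := by linarith
    calc (1 - x) ^ (#T + 1) * #(R.biUnion A)ᶜ
        = (1 - x) * ((1 - x) ^ #T * #(R.biUnion A)ᶜ) := by ring
      _ ≤ (1 - x) * #((R ∪ T).biUnion A)ᶜ := by gcongr
      _ ≤ #((insert j (R ∪ T)).biUnion A)ᶜ := by
        rw [← hstep] at hj ⊢; push_cast at hj ⊢; linarith

variable {Γ : ι → Finset ι} {d : ℕ} {p : ℝ}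

lemma card_inter_compl_biUnion_le_of_ssubset (hx0 : 0 ≤ x) (hx1 : x ≤ 1) (hΓ : ∀ i, #(Γ i) ≤ d)
    (hp : ∀ i S, Disjoint S (Γ i) → (#(A i ∩ (S.biUnion A)ᶜ) : ℝ) ≤ p * #(S.biUnion A)ᶜ)
    (hpx : p ≤ x * (1 - x) ^ d) (S : Finset ι)
    (hQ : ∀ S' ⊂ S, ∀ i, (#(A i ∩ (S'.biUnion A)ᶜ) : ℝ) ≤ x * #(S'.biUnion A)ᶜ) (i : ι) :
    (#(A i ∩ (S.biUnion A)ᶜ) : ℝ) ≤ x * #(S.biUnion A)ᶜ := by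
  have hS : S \ Γ i ∪ S ∩ Γ i = S := sdiff_union_inter S (Γ i)
  have hpeel := one_sub_pow_mul_card_compl_biUnion_le hx1 (disjoint_sdiff_inter S (Γ i)) (hS ▸ hQ)
  rw [hS] at hpeel
  have hfar : (#(A i ∩ (S.biUnion A)ᶜ) : ℝ) ≤ p * #((S \ Γ i).biUnion A)ᶜ := by
    refine le_trans ?_ (hp i _ sdiff_disjoint)
    gcongr
    exact sdiff_subset
  have hnear : (1 - x) ^ d ≤ (1 - x) ^ #(S ∩ Γ i) :=
    pow_le_pow_of_le_one (by linarith) (by linarith)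
      ((card_le_card inter_subset_right).trans (hΓ i))
  calc (#(A i ∩ (S.biUnion A)ᶜ) : ℝ) ≤ p * #((S \ Γ i).biUnion A)ᶜ := hfar
    _ ≤ x * (1 - x) ^ #(S ∩ Γ i) * #((S \ Γ i).biUnion A)ᶜ := by
      gcongr; exact hpx.trans (by gcongr)
    _ ≤ x * #(S.biUnion A)ᶜ := by rw [mul_assoc]; gcongr

theorem exists_forall_notMem_of_le_mul_one_sub_pow [Fintype ι] [Nonempty Ω]
    (hx0 : 0 ≤ x) (hx1 : x < 1) (hΓ : ∀ i, #(Γ i) ≤ d)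
    (hp : ∀ i S, Disjoint S (Γ i) → (#(A i ∩ (S.biUnion A)ᶜ) : ℝ) ≤ p * #(S.biUnion A)ᶜ)
    (hpx : p ≤ x * (1 - x) ^ d) : ∃ ω, ∀ i, ω ∉ A i := by
  have hQ : ∀ (S : Finset ι) i, (#(A i ∩ (S.biUnion A)ᶜ) : ℝ) ≤ x * #(S.biUnion A)ᶜ := fun S =>
    S.strongInduction fun S ih => card_inter_compl_biUnion_le_of_ssubset hx0 hx1.le hΓ hp hpx S ih
  have hpos : (0 : ℝ) < #((univ : Finset ι).biUnion A)ᶜ := by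
    have := one_sub_pow_mul_card_compl_biUnion_le hx1.le (disjoint_empty_left univ) fun S _ => hQ S
    rw [empty_union, biUnion_empty, compl_empty, card_univ] at this
    exact this.trans_lt' (by have := sub_pos.mpr hx1; positivity)
  obtain ⟨ω, hω⟩ := card_pos.mp (by exact_mod_cast hpos)
  exact ⟨ω, fun i hi => (mem_compl.mp hω) (mem_biUnion.mpr ⟨i, mem_univ i, hi⟩)⟩

theorem exists_forall_notMem_of_exp_one_mul_le [Fintype ι] [Nonempty Ω]
    (hΓ : ∀ i, #(Γ i) ≤ d)
    (hp : ∀ i S, Disjoint S (Γ i) → (#(A i ∩ (S.biUnion A)ᶜ) : ℝ) ≤ p * #(S.biUnion A)ᶜ)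
    (hpd : exp 1 * p * (d + 1) ≤ 1) : ∃ ω, ∀ i, ω ∉ A i := by
  -- `x = 1 / (d + 2)`: `x (1 - x)^d = 1 / ((d + 1) (1 + 1 / (d + 1))^(d + 1)) ≥ 1 / (e (d + 1))`
  refine exists_forall_notMem_of_le_mul_one_sub_pow (x := 1 / (d + 2)) (by positivity)
    ((div_lt_one (by positivity)).mpr (by linarith)) hΓ hp ?_
  have hx : 1 / ((d : ℝ) + 2) * (1 - 1 / (d + 2)) ^ d
      = ((1 + ((d + 1 : ℕ) : ℝ)⁻¹) ^ (d + 1))⁻¹ / (d + 1) := by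
    have h1 : 1 - 1 / ((d : ℝ) + 2) = (d + 1) / (d + 2) := by field_simp; ring
    have h2 : 1 + ((d + 1 : ℕ) : ℝ)⁻¹ = (d + 2) / (d + 1) := by push_cast; field_simp; ring
    rw [h1, h2, div_pow, div_pow, pow_succ, pow_succ]
    field_simp
  calc p ≤ (exp 1)⁻¹ / (d + 1) := by
        rw [inv_eq_one_div, div_div, le_div_iff₀ (by positivity)]
        linarith
    _ ≤ _ := by rw [hx]; gcongr; exact one_add_inv_pow_le_exp

end LovaszLocalLemma

section Independence

variable {V β : Type*} [Fintype V] [DecidableEq V] [Fintype β] [DecidableEq β]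
  {E F : Finset (V → β)} {U W : Finset V}

-- `(ω, σ) ↦ (U.piecewise ω σ, U.piecewise σ ω)` swaps the `U`-coordinates of two samples: it is
-- an involution of `Ω × Ω` exchanging `(E ∩ F) × Ω` and `E × F`
theorem card_inter_mul_card_eq (hUW : Disjoint U W) (hE : DependsOn (· ∈ E) (U : Set V))
    (hF : DependsOn (· ∈ F) (W : Set V)) :
    #(E ∩ F) * Fintype.card (V → β) = #E * #F := by
  have hEU : ∀ ω σ, ω ∈ E → U.piecewise ω σ ∈ E := fun ω σ hω =>
    (hE fun u hu => piecewise_eq_of_mem _ _ _ hu).mpr hω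
  have hFW : ∀ ω σ, σ ∈ F → U.piecewise ω σ ∈ F := fun ω σ hσ =>
    (hF fun u hu => piecewise_eq_of_notMem _ _ _ (disjoint_right.mp hUW hu)).mpr hσ
  rw [← card_univ, ← card_product, ← card_product]
  refine card_nbij' (fun s => (U.piecewise s.1 s.2, U.piecewise s.2 s.1))
    (fun s => (U.piecewise s.1 s.2, U.piecewise s.2 s.1)) ?_ ?_
    (fun _ _ => by simp [piecewise_same]) (fun _ _ => by simp [piecewise_same])
  · rintro ⟨τ, ρ⟩ h
    simp only [coe_product, Set.mem_prod, mem_coe, mem_inter] at h ⊢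
    exact ⟨hEU τ ρ h.1.1, hFW ρ τ h.1.2⟩
  · rintro ⟨ω, σ⟩ h
    simp only [coe_product, Set.mem_prod, mem_coe, mem_inter, mem_univ, and_true] at h ⊢
    exact ⟨hEU ω σ h.1, hFW ω σ h.2⟩

theorem card_inter_le_of_dependsOn {p : ℝ} (hUW : Disjoint U W)
    (hE : DependsOn (· ∈ E) (U : Set V)) (hF : DependsOn (· ∈ F) (W : Set V))
    (hEp : (#E : ℝ) ≤ p * Fintype.card (V → β)) : (#(E ∩ F) : ℝ) ≤ p * #F := by
  obtain _ | _ := isEmpty_or_nonempty (V → β)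
  · simp [eq_empty_of_isEmpty F]
  have h : (0 : ℝ) < Fintype.card (V → β) := by exact_mod_cast Fintype.card_pos
  have := card_inter_mul_card_eq hUW hE hF
  rw [← mul_le_mul_iff_of_pos_right h]
  calc (#(E ∩ F) : ℝ) * Fintype.card (V → β) = #E * #F := by exact_mod_cast this
    _ ≤ p * Fintype.card (V → β) * #F := by gcongr
    _ = _ := by ring

lemma dependsOn_mem_compl_biUnion {ι : Type*} {A : ι → Finset (V → β)} {N : ι → Finset V}
    (hA : ∀ i, DependsOn (· ∈ A i) (N i : Set V)) (S : Finset ι) :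
    DependsOn (· ∈ (S.biUnion A)ᶜ) (S.biUnion N : Set V) := by
  intro ω σ h
  simp only [mem_compl, mem_biUnion, not_exists, not_and]
  refine forall_congr fun i => forall_congr fun hi => ?_
  rw [show (ω ∈ A i) = (σ ∈ A i) from hA i fun u hu => h u (by simpa using ⟨i, hi, hu⟩)]

end Independence

lemma one_le_fifth_two_pow_add (s : ℕ) (hs : s ≠ 1) :
    1 ≤ 1 / 5 * 2 ^ s + 4 / 5 * (1 / 2 : ℝ) ^ s := by
  rcases Nat.lt_or_ge s 2 with h | h
  · interval_cases s
    · norm_num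
    · contradiction
  · have h4 : (4 : ℝ) ≤ 2 ^ s := by
      calc (4 : ℝ) = 2 ^ 2 := by norm_num
        _ ≤ 2 ^ s := pow_le_pow_right₀ (by norm_num) h
    have hinv : (2 : ℝ) ^ s * (1 / 2) ^ s = 1 := by rw [← mul_pow]; norm_num
    nlinarith [pow_pos (show (0 : ℝ) < 1 / 2 by norm_num) s]

lemma fifth_exp_add_le_exp (μ : ℝ) (hμ0 : 0 ≤ μ) (hμ : μ ≤ 1 / 2) :
    1 / 5 * exp μ + 4 / 5 * exp (-(μ / 2)) ≤ exp (-(μ / 12)) := by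
  have hhalf : exp (1 / 2) ≤ 5 / 3 := by
    have h : exp (1 / 2) * exp (1 / 2) = exp 1 := by rw [← exp_add]; norm_num
    nlinarith [exp_one_lt_d9, exp_pos (1 / 2)]
  -- `32 / 41 = 1 / (1 + 1/4 + 1/32)`
  have hquarter : exp (-(1 / 4)) ≤ 32 / 41 := by
    rw [exp_neg, inv_le_comm₀ (exp_pos _) (by norm_num)]
    have := quadratic_le_exp_of_nonneg (x := 1 / 4) (by norm_num)
    linarith
  -- the left side is convex in `μ`, so it lies below its chord on `[0, 1/2]`, which ends at
  -- `1/3 + 128/205 ≤ 1 - 1/24`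
  have hconv : ∀ a : ℝ, exp (2 * μ * a) ≤ 1 - 2 * μ + 2 * μ * exp a := fun a => by
    have := convexOn_exp.2 (Set.mem_univ 0) (Set.mem_univ a) (by linarith) (by linarith)
      (sub_add_cancel 1 (2 * μ))
    simpa using this
  have h1 := hconv (1 / 2)
  have h2 := hconv (-(1 / 4))
  have := add_one_le_exp (-(μ / 12))
  rw [show 2 * μ * (1 / 2) = μ by ring] at h1
  rw [show 2 * μ * (-(1 / 4)) = -(μ / 2) by ring] at h2
  nlinarith

section UniqueColor

lemma sum_prod_comp_eq {V X R : Type*} [Fintype V] [DecidableEq V] [Fintype X] [CommSemiring R]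
    (w : X → R) (N : Finset V) :
    ∑ ω : V → X, ∏ u ∈ N, w (ω u) = (∑ x, w x) ^ #N * (Fintype.card X : R) ^ #Nᶜ := by
  have h : ∀ ω : V → X, ∏ u ∈ N, w (ω u) = ∏ u, if u ∈ N then w (ω u) else 1 := fun ω => by
    rw [prod_ite_mem, univ_inter]
  simp_rw [h]
  rw [← Fintype.prod_sum (fun u x => if u ∈ N then w x else 1)]
  simp [prod_ite, compl_eq_univ_sdiff, sdiff_eq_filter]

lemma prod_comp_eq_prod_pow {V X M : Type*} [Fintype X] [DecidableEq X] [CommMonoid M]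
    (w : X → M) (ω : V → X) (N : Finset V) :
    ∏ u ∈ N, w (ω u) = ∏ x, w x ^ #{u ∈ N | ω u = x} := by
  rw [← prod_fiberwise' N ω w]
  simp [prod_const]

variable {V κ β : Type*} [Fintype V] [DecidableEq V] [Fintype κ] [DecidableEq κ] [Fintype β]
  [DecidableEq β]

-- the colours of `β` play the role of "uncoloured"
def noUniqueColor (N : Finset V) : Finset (V → κ ⊕ β) :=
  {ω | ∀ j, #{u ∈ N | ω u = .inl j} ≠ 1}

lemma dependsOn_mem_noUniqueColor (N : Finset V) :
    DependsOn (· ∈ (noUniqueColor N : Finset (V → κ ⊕ β))) (N : Set V) := by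
  intro ω σ h
  simp only [noUniqueColor, mem_filter, mem_univ, true_and]
  congr! 4 with j u hu
  rw [h u hu]

lemma exists_existsUnique_of_notMem_noUniqueColor {N : Finset V} {ω : V → κ ⊕ β}
    (hω : ω ∉ noUniqueColor N) : ∃ j, ∃! u, u ∈ N ∧ ω u = .inl j := by
  simp only [noUniqueColor, mem_filter, mem_univ, true_and, not_forall, not_not,
    card_eq_one, eq_singleton_iff_unique_mem] at hω
  obtain ⟨j, u, hu, huniq⟩ := hω
  exact ⟨j, u, hu, huniq⟩

variable {T : Type*} [Fintype T] {q l : T → ℝ}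

lemma card_noUniqueColor_le_sum (hq : ∀ t, 0 ≤ q t) (hl : ∀ t, 0 ≤ l t)
    (hql : ∀ s ≠ 1, 1 ≤ ∑ t, q t * l t ^ s) (N : Finset V) :
    (#(noUniqueColor N : Finset (V → κ ⊕ β)) : ℝ) ≤
      ∑ ω : V → κ ⊕ β, ∏ j, ∑ t, q t * l t ^ #{u ∈ N | ω u = .inl j} := by
  have hnonneg : ∀ ω : V → κ ⊕ β, 0 ≤ ∏ j, ∑ t, q t * l t ^ #{u ∈ N | ω u = .inl j} :=
    fun ω => prod_nonneg fun j _ => sum_nonneg fun t _ => mul_nonneg (hq t) (pow_nonneg (hl t) _)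
  rw [card_eq_sum_ones, Nat.cast_sum, Nat.cast_one]
  refine (sum_le_sum fun ω hω => ?_).trans
    (sum_le_sum_of_subset_of_nonneg (subset_univ _) fun ω _ _ => hnonneg ω)
  exact one_le_prod fun j _ => hql _ ((mem_filter.mp hω).2 j)

-- After expanding `∏ j, ∑ t` as a sum over `χ : κ → T`, each summand is a product over `u ∈ N`
-- of a weight of `ω u`, which sums over `ω` coordinatewise.
lemma sum_prod_moment_eq (q l : T → ℝ) (N : Finset V) :
    ∑ ω : V → κ ⊕ β, ∏ j, ∑ t, q t * l t ^ #{u ∈ N | ω u = .inl j}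
      = ∑ χ : κ → T, (∏ j, q (χ j)) *
          ((∑ j, l (χ j) + Fintype.card β) ^ #N * (Fintype.card (κ ⊕ β) : ℝ) ^ #Nᶜ) := by
  simp_rw [Fintype.prod_sum, prod_mul_distrib]
  rw [sum_comm]
  refine sum_congr rfl fun χ _ => ?_
  rw [← mul_sum]
  congr 1
  have h : ∀ ω : V → κ ⊕ β, ∏ j, l (χ j) ^ #{u ∈ N | ω u = .inl j}
      = ∏ u ∈ N, Sum.elim (l ∘ χ) 1 (ω u) := fun ω => by
    rw [prod_comp_eq_prod_pow, Fintype.prod_sum_type]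
    simp
  simp_rw [h, sum_prod_comp_eq, Fintype.sum_sum_type]
  simp

lemma add_pow_mul_pow_le_exp {M z : ℝ} (hM : 0 < M) (hz : 0 ≤ M + z) (m n : ℕ) :
    (M + z) ^ m * M ^ n ≤ M ^ (m + n) * exp (m / M * z) := by
  have h : M + z ≤ M * exp (z / M) := by
    have := add_one_le_exp (z / M)
    calc M + z = M * (z / M + 1) := by field_simp; ring
      _ ≤ _ := by gcongr
  calc (M + z) ^ m * M ^ n ≤ (M * exp (z / M)) ^ m * M ^ n := by gcongr
    _ = M ^ (m + n) * exp (m / M * z) := by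
      rw [mul_pow, ← exp_nat_mul, pow_add]; ring_nf

theorem card_noUniqueColor_le (hq : ∀ t, 0 ≤ q t) (hl : ∀ t, 0 ≤ l t)
    (hql : ∀ s ≠ 1, 1 ≤ ∑ t, q t * l t ^ s) (N : Finset V) (hM : 0 < Fintype.card (κ ⊕ β)) :
    (#(noUniqueColor N : Finset (V → κ ⊕ β)) : ℝ) ≤
      (∑ t, q t * exp (#N / Fintype.card (κ ⊕ β) * (l t - 1))) ^ Fintype.card κ *
        (Fintype.card (κ ⊕ β) : ℝ) ^ Fintype.card V := by
  set M : ℝ := (Fintype.card (κ ⊕ β) : ℝ)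
  have hM' : 0 < M := Nat.cast_pos.mpr hM
  calc _ ≤ _ := card_noUniqueColor_le_sum hq hl hql N
    _ = _ := sum_prod_moment_eq q l N
    _ ≤ ∑ χ : κ → T, (∏ j, q (χ j)) *
          (M ^ Fintype.card V * exp (#N / M * ∑ j, (l (χ j) - 1))) := by
      refine sum_le_sum fun χ _ => mul_le_mul_of_nonneg_left ?_ (prod_nonneg fun j _ => hq _)
      have h : ∑ j, l (χ j) + Fintype.card β = M + ∑ j, (l (χ j) - 1) := by
        simp [M, sum_sub_distrib]; ring
      rw [h, ← card_add_card_compl N]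
      refine add_pow_mul_pow_le_exp hM' ?_ _ _
      rw [← h]
      exact add_nonneg (sum_nonneg fun j _ => hl _) (Nat.cast_nonneg _)
    _ = M ^ Fintype.card V * ∑ χ : κ → T, ∏ j, q (χ j) * exp (#N / M * (l (χ j) - 1)) := by
      rw [mul_sum]
      refine sum_congr rfl fun χ _ => ?_
      rw [mul_sum, exp_sum, prod_mul_distrib]
      ring
    _ = _ := by
      rw [← Fintype.prod_sum (fun _ t => q t * exp (#N / M * (l t - 1))), prod_const,
        card_univ, mul_comm]

theorem card_noUniqueColor_le_exp {N : Finset V} {μ : ℝ} (hM : 0 < Fintype.card (κ ⊕ β))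
    (hμ : μ ≤ #N / Fintype.card (κ ⊕ β)) (hN : 2 * #N ≤ Fintype.card (κ ⊕ β)) :
    (#(noUniqueColor N : Finset (V → κ ⊕ β)) : ℝ) ≤
      exp (-(μ * Fintype.card κ / 12)) * Fintype.card (V → κ ⊕ β) := by
  set ν : ℝ := #N / Fintype.card (κ ⊕ β)
  have hν : ν ≤ 1 / 2 := by
    rw [div_le_div_iff₀ (Nat.cast_pos.mpr hM) two_pos]
    exact_mod_cast (by omega : #N * 2 ≤ 1 * Fintype.card (κ ⊕ β))
  have hmix : ∑ t, ![1 / 5, 4 / 5] t * exp (ν * (![2, 1 / 2] t - 1)) ≤ exp (-(ν / 12)) := by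
    convert fifth_exp_add_le_exp ν (by positivity) hν using 1
    simp only [Fin.sum_univ_two]
    norm_num
    ring_nf
  refine (card_noUniqueColor_le (q := ![1 / 5, 4 / 5]) (l := ![2, 1 / 2]) ?_ ?_ ?_ N hM).trans ?_
  · intro t; fin_cases t <;> norm_num
  · intro t; fin_cases t <;> norm_num
  · intro s hs; simpa [Fin.sum_univ_two] using one_le_fifth_two_pow_add s hs
  rw [Fintype.card_fun, Nat.cast_pow]
  gcongr
  calc _ ≤ exp (-(ν / 12)) ^ Fintype.card κ := by
        gcongr
        exact sum_nonneg fun t _ => by fin_cases t <;> simp <;> positivity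
    _ = exp (-(ν * Fintype.card κ / 12)) := by rw [← exp_nat_mul]; ring_nf
    _ ≤ _ := by gcongr

end UniqueColor

lemma exp_one_mul_exp_neg_mul_le_one {D a : ℝ} (hD : 1 ≤ D) (ha : 2 * log (2 * D) + 1 ≤ a) :
    exp 1 * exp (-a) * (D ^ 2 + 2) ≤ 1 := by
  have h : D ^ 2 + 2 ≤ exp (2 * log (2 * D)) := by
    rw [two_mul (log _), exp_add, exp_log (by positivity)]
    nlinarith
  calc exp 1 * exp (-a) * (D ^ 2 + 2) ≤ exp 1 * exp (-a) * exp (2 * log (2 * D)) := by gcongr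
    _ = exp (1 - a + 2 * log (2 * D)) := by rw [← exp_add, ← exp_add]; ring_nf
    _ ≤ 1 := exp_le_one_iff.mpr (by linarith)

section Graph

variable {V : Type} [Fintype V] (G : SimpleGraph V)

theorem chiON_le_card {α : Type*} [Fintype α] (g : V → α)
    (hg : ∀ v, ∃ a, ∃! u, u ∈ G.neighborSet v ∧ g u = a) : chiON G ≤ Fintype.card α := by
  refine Nat.sInf_le ⟨Fintype.equivFin α ∘ g, fun v => ?_⟩
  obtain ⟨a, hu⟩ := hg v
  exact ⟨Fintype.equivFin α a, by simpa using hu⟩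

variable [DecidableRel G.Adj]

lemma le_half_of_forall_le_degree_div {μ : ℝ} (hΔ : 0 < G.maxDegree)
    (hμ : ∀ v, μ ≤ G.degree v / (2 * G.maxDegree)) : μ ≤ 1 / 2 := by
  have : Nonempty V := by
    by_contra h
    have := not_nonempty_iff.mp h
    simp at hΔ
  obtain ⟨v, hv⟩ := G.exists_maximal_degree_vertex
  have hΔ' : (0 : ℝ) < G.maxDegree := by exact_mod_cast hΔ
  simpa [← hv, div_mul_cancel_right₀ hΔ'.ne'] using hμ v

variable [DecidableEq V]

lemma card_insert_biUnion_neighborFinset_le (v : V) :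
    #(insert v ((G.neighborFinset v).biUnion (G.neighborFinset ·))) ≤ G.maxDegree ^ 2 + 1 := by
  refine (card_insert_le _ _).trans (Nat.add_le_add_right ?_ 1)
  calc #((G.neighborFinset v).biUnion (G.neighborFinset ·))
      ≤ ∑ w ∈ G.neighborFinset v, #(G.neighborFinset w) := card_biUnion_le
    _ ≤ ∑ w ∈ G.neighborFinset v, G.maxDegree := sum_le_sum fun w _ => by
      rw [G.card_neighborFinset_eq_degree]; exact G.degree_le_maxDegree w
    _ ≤ G.maxDegree ^ 2 := by
      rw [sum_const, smul_eq_mul, G.card_neighborFinset_eq_degree, sq]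
      exact Nat.mul_le_mul_right _ (G.degree_le_maxDegree v)

lemma disjoint_neighborFinset_biUnion {v : V} {S : Finset V}
    (hS : Disjoint S (insert v ((G.neighborFinset v).biUnion (G.neighborFinset ·)))) :
    Disjoint (G.neighborFinset v) (S.biUnion (G.neighborFinset ·)) := by
  refine disjoint_left.mpr fun w hw hwS => ?_
  obtain ⟨u, hu, huw⟩ := mem_biUnion.mp hwS
  refine disjoint_left.mp hS hu (mem_insert_of_mem (mem_biUnion.mpr ⟨w, hw, ?_⟩))
  simpa [SimpleGraph.adj_comm] using huw

theorem chiON_le_succ_of_log_le {k : ℕ} {μ : ℝ} (hk : k ≤ 2 * G.maxDegree)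
    (hμ : ∀ v, μ ≤ G.degree v / (2 * G.maxDegree))
    (hkμ : 2 * log (2 * G.maxDegree) + 1 ≤ μ * k / 12) : chiON G ≤ k + 1 := by
  set Δ := G.maxDegree
  have hΔ : 1 ≤ Δ := by
    by_contra h
    simp [show Δ = 0 by omega, show k = 0 by omega] at hkμ
    linarith
  have hM : Fintype.card (Fin k ⊕ Fin (2 * Δ - k)) = 2 * Δ := by simp; omega
  have : Nonempty (Fin k ⊕ Fin (2 * Δ - k)) := Fintype.card_pos_iff.mp (by omega)
  let A (v : V) : Finset (V → Fin k ⊕ Fin (2 * Δ - k)) := noUniqueColor (G.neighborFinset v)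
  let Γ (v : V) : Finset V := insert v ((G.neighborFinset v).biUnion (G.neighborFinset ·))
  have hA (v : V) :
      (#(A v) : ℝ) ≤ exp (-(μ * k / 12)) * Fintype.card (V → Fin k ⊕ Fin (2 * Δ - k)) := by
    have hdeg := G.card_neighborFinset_eq_degree v
    simpa using card_noUniqueColor_le_exp (κ := Fin k) (β := Fin (2 * Δ - k))
      (N := G.neighborFinset v) (by omega)
      (by rw [hM, hdeg]; push_cast; exact hμ v)
      (by rw [hM, hdeg]; exact Nat.mul_le_mul_left 2 (G.degree_le_maxDegree v))
  have hcond (v : V) (S : Finset V) (hS : Disjoint S (Γ v)) :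
      (#(A v ∩ (S.biUnion A)ᶜ) : ℝ) ≤ exp (-(μ * k / 12)) * #(S.biUnion A)ᶜ :=
    card_inter_le_of_dependsOn (disjoint_neighborFinset_biUnion G hS)
      (dependsOn_mem_noUniqueColor _)
      (dependsOn_mem_compl_biUnion (fun u => dependsOn_mem_noUniqueColor _) S) (hA v)
  have hlll : exp 1 * exp (-(μ * k / 12)) * ((Δ ^ 2 + 1 : ℕ) + 1) ≤ 1 := by
    have := exp_one_mul_exp_neg_mul_le_one (D := Δ) (by exact_mod_cast hΔ) hkμ
    push_cast
    linarith
  obtain ⟨ω, hω⟩ := exists_forall_notMem_of_exp_one_mul_le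
    (card_insert_biUnion_neighborFinset_le G) hcond hlll
  simpa using chiON_le_card G (fun u => (ω u).getLeft?) fun v => by
    obtain ⟨j, hj⟩ := exists_existsUnique_of_notMem_noUniqueColor (hω v)
    exact ⟨some j, by simpa using hj⟩

end Graph

lemma eventually_mul_log_rpow_le (C s : ℝ) : ∀ᶠ n : ℕ in atTop, C * log (2 * n) ^ s ≤ n := by
  have ho := ((isLittleO_log_rpow_rpow_atTop s one_pos).comp_tendsto
    (tendsto_id.const_mul_atTop two_pos)).const_mul_left C
  refine (tendsto_natCast_atTop_atTop (R := ℝ)).eventually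
    (p := fun x => C * log (2 * x) ^ s ≤ x) ?_
  filter_upwards [ho.bound (half_pos one_pos), eventually_ge_atTop 0] with x hx hx0
  simp only [Function.comp_apply, id, rpow_one, norm_mul, Real.norm_eq_abs,
    abs_of_nonneg hx0, abs_two] at hx
  linarith [le_abs_self (C * log (2 * x) ^ s), abs_mul C (log (2 * x) ^ s)]

lemma two_mul_log_add_one_le_mul_floor {c ε D : ℝ} (hc : 0 < c) (hε : 0 ≤ ε) (hD : 2 ≤ D)
    (hμ : c / (2 * log D ^ ε) ≤ 1 / 2) :
    2 * log (2 * D) + 1 ≤ c / (2 * log D ^ ε) * ⌊490 / c * log (2 * D) ^ (1 + ε)⌋₊ / 12 := by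
  set μ := c / (2 * log D ^ ε)
  set y := 490 / c * log (2 * D) ^ (1 + ε)
  have hℓ : 0 < log D := log_pos (by linarith)
  have hℓL : log D ≤ log (2 * D) := log_le_log (by linarith) (by linarith)
  have hL : 1 ≤ log (2 * D) := by
    rw [le_log_iff_exp_le (by linarith)]
    linarith [exp_one_lt_d9]
  have hμy : 245 * log (2 * D) ≤ μ * y := by
    have hμy : μ * y = 245 * log (2 * D) * (log (2 * D) ^ ε / log D ^ ε) := by
      simp only [μ, y]
      rw [rpow_add (by linarith), rpow_one]
      field_simp
      ring
    have := (one_le_div (by positivity)).mpr (rpow_le_rpow hℓ.le hℓL hε)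
    rw [hμy]
    nlinarith
  have hfloor : μ * (y - 1) ≤ μ * ⌊y⌋₊ :=
    mul_le_mul_of_nonneg_left (by linarith [Nat.lt_floor_add_one y]) (by positivity)
  nlinarith

theorem chiON_high_min_degree (c ε : ℝ) (hc : 0 < c) (hε : 0 ≤ ε) :
    ∃ Δ₀ : ℕ, ∀ (V : Type) [Fintype V] (G : SimpleGraph V) [DecidableRel G.Adj],
      Δ₀ ≤ G.maxDegree →
      (∀ v : V, c * G.maxDegree / (Real.log G.maxDegree) ^ ε ≤ (G.degree v : ℝ)) →
      (chiON G : ℝ) ≤ (490 / c) * Real.log (2 * G.maxDegree) ^ (1 + ε) + 1 := by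
  obtain ⟨Δ₀, hΔ₀⟩ := eventually_atTop.mp
    ((eventually_mul_log_rpow_le (490 / c) (1 + ε)).and (eventually_ge_atTop 2))
  refine ⟨Δ₀, fun V _ G _ hΔ hdeg => ?_⟩
  classical
  obtain ⟨hyΔ, hΔ2⟩ := hΔ₀ _ hΔ
  have hΔ2' : (2 : ℝ) ≤ G.maxDegree := by exact_mod_cast hΔ2
  have hℓ : 0 < log G.maxDegree := log_pos (by linarith)
  have hμ (v : V) : c / (2 * log G.maxDegree ^ ε) ≤ G.degree v / (2 * G.maxDegree) := by
    have := hdeg v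
    rw [div_le_iff₀ (by positivity)] at this
    rw [div_le_div_iff₀ (by positivity) (by positivity)]
    linarith
  have hk : ⌊490 / c * log (2 * G.maxDegree) ^ (1 + ε)⌋₊ ≤ 2 * G.maxDegree :=
    (Nat.floor_le_of_le hyΔ).trans (by omega)
  calc (chiON G : ℝ) ≤ ⌊490 / c * log (2 * G.maxDegree) ^ (1 + ε)⌋₊ + 1 := by
        exact_mod_cast chiON_le_succ_of_log_le G hk hμ <| two_mul_log_add_one_le_mul_floor hc hε
          hΔ2' (le_half_of_forall_le_degree_div G (by omega) hμ)
    _ ≤ _ := by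
      gcongr
      exact Nat.floor_le (mul_nonneg (by positivity) (rpow_nonneg (log_nonneg (by linarith)) _))
end

section
/- Let G be a graph on n vertices with claw number at most k − 1 (i.e., K_{1,k}-free), and let S be a maximal independent set of G. Choose i uniformly at random from {0, 1, …, ⌊log₂ k⌋} and then include each vertex of S independently with probability 2^{−i} to form I ⊆ S. Then every vertex w ∉ S satisfies Pr[|N(w) ∩ I| = 1] ≥ c/(⌊log₂ k⌋ + 1) for the absolute constant c = 0.02, and every v ∈ S satisfies Pr[v ∈ I] ≥ 1/(⌊log₂ k⌋ + 1). Consequently there exists a set I* ⊆ S such that at least c·n/(⌊log₂ k⌋ + 1) vertices of G have exactly one neighbor in I* or belong to I*. -/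
/-!
Fix `w ∉ S` and let `d = |N(w) ∩ S|`; maximality of `S` gives `d ≥ 1`, and since `S` is
independent, `K_{1,k}`-freeness gives `d < k`. At the scale `i = ⌊log₂ d⌋`, that is for
`p = 2⁻ⁱ ∈ (1/(2d), 1/d]`, exactly one neighbour of `w` is chosen with probability
`d p (1 - p)^(d-1) ≥ (1 - p)^(2(1/p - 1)) ≥ e⁻² > 0.02`, and this scale is drawn with probability
`1/(⌊log₂ k⌋ + 1)`. A vertex of `S` is chosen with probability `1` at scale `0`. Hence the expected
number of vertices lying in `I` or having exactly one neighbour in `I` is at least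
`0.02 n/(⌊log₂ k⌋ + 1)`, and some outcome `I` does at least as well as the expectation.
-/

open Finset

/-- `G` is `K_{1,k}`-free: it contains no induced star `K_{1,k}`, i.e. no vertex `v`
with `k` pairwise nonadjacent neighbors. -/
def K1kFree {V : Type} (G : SimpleGraph V) (k : ℕ) : Prop :=
  ¬ ∃ (v : V) (T : Finset V), T.card = k ∧ v ∉ T ∧ (∀ u ∈ T, G.Adj v u) ∧
      ∀ u ∈ T, ∀ w ∈ T, u ≠ w → ¬ G.Adj u w

theorem exp_neg_one_le_one_sub_inv_pow (m : ℕ) (hm : 1 ≤ m) :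
    Real.exp (-1) ≤ (1 - (m : ℝ)⁻¹) ^ (m - 1) := by
  obtain ⟨n, rfl⟩ := Nat.exists_eq_add_of_le' hm
  have hinv : (1 - ((n + 1 : ℕ) : ℝ)⁻¹) ^ n = ((1 + (n : ℝ)⁻¹) ^ n)⁻¹ := by
    rcases n.eq_zero_or_pos with rfl | hn
    · simp
    · rw [← inv_pow]
      congr 1
      field_simp
      push_cast
      ring
  rw [Nat.add_sub_cancel, hinv, Real.exp_neg]
  exact inv_anti₀ (by positivity) Real.one_add_inv_pow_le_exp

noncomputable def exactlyOneProb (d : ℕ) (p : ℝ) : ℝ := d * (p * (1 - p) ^ (d - 1))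

theorem exactlyOneProb_nonneg (d : ℕ) {p : ℝ} (hp₀ : 0 ≤ p) (hp₁ : p ≤ 1) :
    0 ≤ exactlyOneProb d p := by
  have : 0 ≤ 1 - p := sub_nonneg.2 hp₁
  unfold exactlyOneProb
  positivity

theorem two_hundredths_le_exactlyOneProb_log (d : ℕ) (hd : 1 ≤ d) :
    (0.02 : ℝ) ≤ exactlyOneProb d ((2 : ℝ)⁻¹ ^ Nat.log 2 d) := by
  set m := 2 ^ Nat.log 2 d
  have hmd : m ≤ d := Nat.pow_log_le_self 2 (by omega)
  have hdm : d < 2 * m := by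
    have := Nat.lt_pow_succ_log_self one_lt_two d
    rwa [pow_succ, mul_comm] at this
  have hm : 1 ≤ m := Nat.one_le_two_pow
  have hp : (2 : ℝ)⁻¹ ^ Nat.log 2 d = (m : ℝ)⁻¹ := by simp [m, inv_pow]
  have hq₀ : 0 ≤ 1 - (m : ℝ)⁻¹ := sub_nonneg.2 (inv_le_one_of_one_le₀ (by exact_mod_cast hm))
  have hq₁ : 1 - (m : ℝ)⁻¹ ≤ 1 := sub_le_self _ (by positivity)
  -- `d < 2m` gives `d - 1 ≤ 2 (m - 1)`, so the factors `1 - 1/m` cost at most `e⁻²`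
  have hpow : Real.exp (-1) ^ 2 ≤ (1 - (m : ℝ)⁻¹) ^ (d - 1) :=
    calc Real.exp (-1) ^ 2 ≤ ((1 - (m : ℝ)⁻¹) ^ (m - 1)) ^ 2 :=
          pow_le_pow_left₀ (Real.exp_nonneg _) (exp_neg_one_le_one_sub_inv_pow m hm) 2
      _ = (1 - (m : ℝ)⁻¹) ^ (2 * (m - 1)) := by rw [← pow_mul, mul_comm]
      _ ≤ (1 - (m : ℝ)⁻¹) ^ (d - 1) := pow_le_pow_of_le_one hq₀ hq₁ (by omega)
  have hdp : 1 ≤ (d : ℝ) * (m : ℝ)⁻¹ := by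
    rw [le_mul_inv_iff₀ (by positivity), one_mul]
    exact_mod_cast hmd
  have he : (0.02 : ℝ) ≤ Real.exp (-1) ^ 2 := by nlinarith [Real.exp_neg_one_gt_d9]
  calc (0.02 : ℝ) ≤ 1 * (1 - (m : ℝ)⁻¹) ^ (d - 1) := by linarith
    _ ≤ (d * (m : ℝ)⁻¹) * (1 - (m : ℝ)⁻¹) ^ (d - 1) := by gcongr
    _ = exactlyOneProb d ((2 : ℝ)⁻¹ ^ Nat.log 2 d) := by rw [exactlyOneProb, hp]; ring

theorem two_hundredths_le_sum_exactlyOneProb {d k : ℕ} (hd : 1 ≤ d) (hdk : d ≤ k) :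
    (0.02 : ℝ) ≤ ∑ i ∈ range (Nat.log 2 k + 1), exactlyOneProb d ((2 : ℝ)⁻¹ ^ i) :=
  (two_hundredths_le_exactlyOneProb_log d hd).trans <|
    single_le_sum (f := fun i ↦ exactlyOneProb d ((2 : ℝ)⁻¹ ^ i))
      (fun i _ ↦ exactlyOneProb_nonneg d (by positivity) (pow_le_one₀ (by norm_num) (by norm_num)))
      (mem_range_succ_iff.2 (Nat.log_mono_right hdk))

theorem sum_mul_prod_erase_const {α : Type*} [DecidableEq α] (F : Finset α) (p : ℝ) :
    ∑ s ∈ F, p * ∏ _y ∈ F.erase s, (1 - p) = exactlyOneProb #F p := by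
  rw [exactlyOneProb, ← nsmul_eq_mul, ← sum_const]
  refine sum_congr rfl fun s hs ↦ ?_
  rw [prod_const, card_erase_of_mem hs]

section SubsetWeight

variable {α : Type*} [DecidableEq α]

-- For `A ⊆ S`, the probability that keeping each element of `S` independently with probability
-- `p` leaves exactly `A`.
noncomputable def subsetWeight (p : ℝ) (S A : Finset α) : ℝ := p ^ #A * (1 - p) ^ #(S \ A)

theorem subsetWeight_nonneg {p : ℝ} (hp₀ : 0 ≤ p) (hp₁ : p ≤ 1) (S A : Finset α) :
    0 ≤ subsetWeight p S A := by
  have : 0 ≤ 1 - p := sub_nonneg.2 hp₁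
  unfold subsetWeight
  positivity

theorem subsetWeight_insert_of_subset (p : ℝ) {S A : Finset α} {a : α} (ha : a ∉ S) (hA : A ⊆ S) :
    subsetWeight p (insert a S) A = (1 - p) * subsetWeight p S A := by
  rw [subsetWeight, subsetWeight, insert_sdiff_of_notMem _ (fun h ↦ ha (hA h)),
    card_insert_of_notMem (fun h ↦ ha (sdiff_subset h)), pow_succ]
  ring

theorem subsetWeight_insert_insert (p : ℝ) {S A : Finset α} {a : α} (ha : a ∉ S) (hA : A ⊆ S) :
    subsetWeight p (insert a S) (insert a A) = p * subsetWeight p S A := by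
  rw [subsetWeight, subsetWeight, insert_sdiff_insert, sdiff_insert_of_notMem ha,
    card_insert_of_notMem (fun h ↦ ha (hA h)), pow_succ]
  ring

/-- The trace `A ∩ F` of a `p`-random subset `A` of `S` is a `p`-random subset of `F`. -/
theorem sum_powerset_mul_subsetWeight_inter (p : ℝ) (φ : Finset α → ℝ) {F S : Finset α}
    (hFS : F ⊆ S) :
    ∑ A ∈ S.powerset, φ (A ∩ F) * subsetWeight p S A =
      ∑ B ∈ F.powerset, φ B * subsetWeight p F B := by
  suffices ∀ T : Finset α, Disjoint F T →
      ∑ A ∈ (F ∪ T).powerset, φ (A ∩ F) * subsetWeight p (F ∪ T) A =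
        ∑ B ∈ F.powerset, φ B * subsetWeight p F B by
    simpa [union_sdiff_of_subset hFS] using this (S \ F) disjoint_sdiff
  intro T hT
  induction T using Finset.induction_on with
  | empty =>
    rw [union_empty]
    exact sum_congr rfl fun B hB ↦ by rw [inter_eq_left.2 (mem_powerset.1 hB)]
  | insert a T haT ih =>
    have haF : a ∉ F := disjoint_left.1 hT.symm (mem_insert_self a T)
    have haFT : a ∉ F ∪ T := by simp [haF, haT]
    rw [union_insert, sum_powerset_insert haFT, ← sum_add_distrib,
      ← ih (disjoint_of_subset_right (subset_insert a T) hT)]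
    refine sum_congr rfl fun A hA ↦ ?_
    rw [mem_powerset] at hA
    rw [insert_inter_of_notMem haF, subsetWeight_insert_of_subset p haFT hA,
      subsetWeight_insert_insert p haFT hA]
    ring

theorem sum_powerset_subsetWeight (p : ℝ) (S : Finset α) :
    ∑ A ∈ S.powerset, subsetWeight p S A = 1 := by
  simpa [subsetWeight] using sum_powerset_mul_subsetWeight_inter p 1 (empty_subset S)

theorem sum_powerset_filter_mem_subsetWeight (p : ℝ) {S : Finset α} {v : α} (hv : v ∈ S) :
    ∑ A ∈ S.powerset with v ∈ A, subsetWeight p S A = p := by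
  have h := sum_powerset_mul_subsetWeight_inter p (fun B ↦ if v ∈ B then 1 else 0)
    (singleton_subset_iff.2 hv)
  simp only [mem_inter, mem_singleton, and_true, ite_mul, one_mul, zero_mul] at h
  rw [sum_filter, h, show ({v} : Finset α) = insert v ∅ from rfl,
    sum_powerset_insert (notMem_empty v)]
  simp [subsetWeight]

theorem sum_powerset_filter_card_inter_eq_one_subsetWeight (p : ℝ) (N S : Finset α) :
    ∑ A ∈ S.powerset with #(N ∩ A) = 1, subsetWeight p S A = exactlyOneProb #(N ∩ S) p := by
  have h := sum_powerset_mul_subsetWeight_inter p (fun B ↦ if #B = 1 then 1 else 0)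
    (inter_subset_right : N ∩ S ⊆ S)
  simp only [ite_mul, one_mul, zero_mul, ← sum_filter, ← powersetCard_eq_filter] at h
  have hevent : {A ∈ S.powerset | #(N ∩ A) = 1} = {A ∈ S.powerset | #(A ∩ (N ∩ S)) = 1} :=
    filter_congr fun A hA ↦ by
      rw [← inter_assoc, inter_comm A N, inter_assoc, inter_eq_left.2 (mem_powerset.1 hA)]
  have hsingleton : ∀ B ∈ powersetCard 1 (N ∩ S),
      subsetWeight p (N ∩ S) B = p * (1 - p) ^ (#(N ∩ S) - 1) := fun B hB ↦ by
    rw [mem_powersetCard] at hB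
    rw [subsetWeight, card_sdiff_of_subset hB.1, hB.2, pow_one]
  rw [hevent, h, sum_congr rfl hsingleton, sum_const, card_powersetCard, Nat.choose_one_right,
    nsmul_eq_mul, exactlyOneProb]

-- The law of `I`: a scale `i` uniform in `{0, …, L}`, then each element of `S` kept with
-- probability `2⁻ⁱ`.
noncomputable def scaleMixtureWeight (L : ℕ) (S A : Finset α) : ℝ :=
  (L + 1 : ℝ)⁻¹ * ∑ i ∈ range (L + 1), subsetWeight ((2 : ℝ)⁻¹ ^ i) S A

theorem scaleMixtureWeight_nonneg (L : ℕ) (S A : Finset α) : 0 ≤ scaleMixtureWeight L S A :=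
  mul_nonneg (by positivity) <| sum_nonneg fun _ _ ↦
    subsetWeight_nonneg (by positivity) (pow_le_one₀ (by norm_num) (by norm_num)) S A

theorem sum_powerset_filter_scaleMixtureWeight (L : ℕ) (S : Finset α) (P : Finset α → Prop)
    [DecidablePred P] :
    ∑ A ∈ S.powerset with P A, scaleMixtureWeight L S A =
      (L + 1 : ℝ)⁻¹ * ∑ i ∈ range (L + 1), ∑ A ∈ S.powerset with P A,
        subsetWeight ((2 : ℝ)⁻¹ ^ i) S A := by
  rw [← sum_comm, mul_sum]
  rfl

theorem sum_powerset_scaleMixtureWeight (L : ℕ) (S : Finset α) :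
    ∑ A ∈ S.powerset, scaleMixtureWeight L S A = 1 := by
  have hL : (L + 1 : ℝ) ≠ 0 := by positivity
  simpa [sum_powerset_subsetWeight, hL] using
    sum_powerset_filter_scaleMixtureWeight L S (fun _ ↦ True)

end SubsetWeight

theorem exists_le_of_le_sum_mul {ι : Type*} (s : Finset ι) (μ f : ι → ℝ)
    (hμ₀ : ∀ i ∈ s, 0 ≤ μ i) (hμ₁ : ∑ i ∈ s, μ i = 1) {c : ℝ}
    (h : c ≤ ∑ i ∈ s, μ i * f i) : ∃ i ∈ s, c ≤ f i := by
  obtain ⟨j, hj, hmax⟩ := exists_max_image s f (nonempty_of_sum_ne_zero (hμ₁ ▸ one_ne_zero))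
  refine ⟨j, hj, h.trans ?_⟩
  calc ∑ i ∈ s, μ i * f i ≤ ∑ i ∈ s, μ i * f j :=
        sum_le_sum fun i hi ↦ mul_le_mul_of_nonneg_left (hmax i hi) (hμ₀ i hi)
    _ = f j := by rw [← sum_mul, hμ₁, one_mul]

theorem exists_le_card_filter_of_le_sum_filter {α β : Type*} [Fintype α] (s : Finset β)
    (μ : β → ℝ) (hμ₀ : ∀ b ∈ s, 0 ≤ μ b) (hμ₁ : ∑ b ∈ s, μ b = 1) (P : α → β → Prop)
    [∀ a b, Decidable (P a b)] {c : ℝ} (h : ∀ a, c ≤ ∑ b ∈ s with P a b, μ b) :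
    ∃ b ∈ s, c * Fintype.card α ≤ #{a | P a b} := by
  refine exists_le_of_le_sum_mul s μ _ hμ₀ hμ₁ ?_
  calc c * Fintype.card α = ∑ _a : α, c := by rw [sum_const, card_univ, nsmul_eq_mul, mul_comm]
    _ ≤ ∑ a : α, ∑ b ∈ s with P a b, μ b := sum_le_sum fun a _ ↦ h a
    _ = ∑ b ∈ s, μ b * #{a | P a b} := by
      simp_rw [sum_filter, card_filter, Nat.cast_sum, mul_sum]
      rw [sum_comm]
      simp

theorem card_neighborFinset_inter_lt_of_K1kFree {V : Type} [Fintype V] [DecidableEq V]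
    (G : SimpleGraph V) [DecidableRel G.Adj] {k : ℕ} (hfree : K1kFree G k) {S : Finset V}
    (hind : ∀ u ∈ S, ∀ v ∈ S, ¬ G.Adj u v) (w : V) : #(G.neighborFinset w ∩ S) < k := by
  by_contra! hk
  obtain ⟨T, hT, hcard⟩ := exists_subset_card_eq hk
  have hTN : ∀ u ∈ T, G.Adj w u := fun u hu ↦ by simpa using (mem_inter.1 (hT hu)).1
  exact hfree ⟨w, T, hcard, fun hw ↦ G.irrefl (hTN w hw), hTN,
    fun u hu v hv _ ↦ hind u (mem_inter.1 (hT hu)).2 v (mem_inter.1 (hT hv)).2⟩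

theorem one_le_sum_range_inv_two_pow (L : ℕ) : 1 ≤ ∑ i ∈ range (L + 1), (2 : ℝ)⁻¹ ^ i := by
  simpa using single_le_sum (f := fun i ↦ (2 : ℝ)⁻¹ ^ i) (fun i _ ↦ by positivity)
    (mem_range.2 L.succ_pos)

theorem two_hundredths_le_sum_exactlyOneProb_neighborFinset_inter {V : Type} [Fintype V]
    [DecidableEq V] (G : SimpleGraph V) [DecidableRel G.Adj] {k : ℕ} (hfree : K1kFree G k)
    {S : Finset V} (hind : ∀ u ∈ S, ∀ v ∈ S, ¬ G.Adj u v)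
    (hmaximal : ∀ v : V, v ∉ S → ∃ u ∈ S, G.Adj v u) {w : V} (hw : w ∉ S) :
    (0.02 : ℝ) ≤
      ∑ i ∈ range (Nat.log 2 k + 1), exactlyOneProb #(G.neighborFinset w ∩ S) ((2 : ℝ)⁻¹ ^ i) := by
  obtain ⟨u, hu, hwu⟩ := hmaximal w hw
  exact two_hundredths_le_sum_exactlyOneProb (card_pos.2 ⟨u, by simp [hu, hwu]⟩)
    (card_neighborFinset_inter_lt_of_K1kFree G hfree hind w).le

theorem two_hundredths_le_sum_subsetWeight_mem_or_card_neighborFinset_inter_eq_one {V : Type}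
    [Fintype V] [DecidableEq V] (G : SimpleGraph V) [DecidableRel G.Adj] {k : ℕ}
    (hfree : K1kFree G k) {S : Finset V} (hind : ∀ u ∈ S, ∀ v ∈ S, ¬ G.Adj u v)
    (hmaximal : ∀ v : V, v ∉ S → ∃ u ∈ S, G.Adj v u) (x : V) :
    (0.02 : ℝ) ≤ ∑ i ∈ range (Nat.log 2 k + 1), ∑ A ∈ S.powerset with
      x ∈ A ∨ #(G.neighborFinset x ∩ A) = 1, subsetWeight ((2 : ℝ)⁻¹ ^ i) S A := by
  have hweaken (Q : Finset V → Prop) [DecidablePred Q] (hQ : ∀ A, Q A →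
      x ∈ A ∨ #(G.neighborFinset x ∩ A) = 1) (i : ℕ) :
      ∑ A ∈ S.powerset with Q A, subsetWeight ((2 : ℝ)⁻¹ ^ i) S A ≤
        ∑ A ∈ S.powerset with x ∈ A ∨ #(G.neighborFinset x ∩ A) = 1,
          subsetWeight ((2 : ℝ)⁻¹ ^ i) S A :=
    sum_le_sum_of_subset_of_nonneg (monotone_filter_right _ fun A _ ↦ hQ A) fun A _ _ ↦
      subsetWeight_nonneg (by positivity) (pow_le_one₀ (by norm_num) (by norm_num)) S A
  by_cases hx : x ∈ S
  · calc (0.02 : ℝ) ≤ ∑ i ∈ range (Nat.log 2 k + 1), (2 : ℝ)⁻¹ ^ i := by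
          linarith [one_le_sum_range_inv_two_pow (Nat.log 2 k)]
      _ = ∑ i ∈ range (Nat.log 2 k + 1), ∑ A ∈ S.powerset with x ∈ A,
            subsetWeight ((2 : ℝ)⁻¹ ^ i) S A := by
        simp_rw [sum_powerset_filter_mem_subsetWeight _ hx]
      _ ≤ _ := sum_le_sum fun i _ ↦ hweaken _ (fun _ ↦ Or.inl) i
  · calc (0.02 : ℝ) ≤ _ :=
          two_hundredths_le_sum_exactlyOneProb_neighborFinset_inter G hfree hind hmaximal hx
      _ = ∑ i ∈ range (Nat.log 2 k + 1), ∑ A ∈ S.powerset with #(G.neighborFinset x ∩ A) = 1,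
            subsetWeight ((2 : ℝ)⁻¹ ^ i) S A := by
        simp_rw [sum_powerset_filter_card_inter_eq_one_subsetWeight]
      _ ≤ _ := sum_le_sum fun i _ ↦ hweaken _ (fun _ ↦ Or.inr) i

theorem random_independent_subset_step_general {V : Type} [Fintype V] [DecidableEq V]
    (G : SimpleGraph V) [DecidableRel G.Adj] (k : ℕ)
    (hfree : K1kFree G k) (S : Finset V)
    (hind : ∀ u ∈ S, ∀ v ∈ S, ¬ G.Adj u v)
    (hmaximal : ∀ v : V, v ∉ S → ∃ u ∈ S, G.Adj v u) :
    (∀ w : V, w ∉ S →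
      (0.02 : ℝ) / (Nat.log 2 k + 1) ≤
        (1 / (Nat.log 2 k + 1 : ℝ)) *
          ∑ i ∈ Finset.range (Nat.log 2 k + 1),
            ∑ s ∈ G.neighborFinset w ∩ S,
              (2 : ℝ)⁻¹ ^ i * ∏ y ∈ (G.neighborFinset w ∩ S).erase s, (1 - (2 : ℝ)⁻¹ ^ i)) ∧
    ((1 : ℝ) / (Nat.log 2 k + 1 : ℝ) ≤
      (1 / (Nat.log 2 k + 1 : ℝ)) *
        ∑ i ∈ Finset.range (Nat.log 2 k + 1), (2 : ℝ)⁻¹ ^ i) ∧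
    (∃ I ⊆ S, (0.02 : ℝ) * Fintype.card V / (Nat.log 2 k + 1) ≤
      ((Finset.univ.filter
        (fun x : V => x ∈ I ∨ (G.neighborFinset x ∩ I).card = 1)).card : ℝ)) := by
  refine ⟨fun w hw ↦ ?_, ?_, ?_⟩
  · simp_rw [sum_mul_prod_erase_const]
    rw [div_eq_mul_one_div, mul_comm]
    exact mul_le_mul_of_nonneg_left
      (two_hundredths_le_sum_exactlyOneProb_neighborFinset_inter G hfree hind hmaximal hw)
      (by positivity)
  · simpa using mul_le_mul_of_nonneg_left (one_le_sum_range_inv_two_pow (Nat.log 2 k))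
      (by positivity : (0 : ℝ) ≤ 1 / (Nat.log 2 k + 1))
  · obtain ⟨I, hI, hcount⟩ := exists_le_card_filter_of_le_sum_filter S.powerset
      (scaleMixtureWeight (Nat.log 2 k) S) (fun A _ ↦ scaleMixtureWeight_nonneg _ S A)
      (sum_powerset_scaleMixtureWeight _ S) (fun x A ↦ x ∈ A ∨ #(G.neighborFinset x ∩ A) = 1)
      (c := 0.02 / (Nat.log 2 k + 1)) fun x ↦ by
        rw [sum_powerset_filter_scaleMixtureWeight, div_eq_inv_mul]
        exact mul_le_mul_of_nonneg_left
          (two_hundredths_le_sum_subsetWeight_mem_or_card_neighborFinset_inter_eq_one G hfree hind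
            hmaximal x) (by positivity)
    exact ⟨I, mem_powerset.1 hI, by rwa [div_mul_eq_mul_div] at hcount⟩

/-- The key probabilistic step for CFCN coloring of $K_{1,k}$-free graphs: picking
$i$ uniformly from $\{0,\dots,\lfloor\log_2 k\rfloor\}$ and then each vertex of a maximal
independent set $S$ independently with probability $2^{-i}$, every vertex outside $S$
has exactly one chosen neighbor with probability at least $0.02/(\lfloor\log_2 k\rfloor+1)$
(the probability being given by its explicit formula), every vertex of $S$ is chosen with
probability at least $1/(\lfloor\log_2 k\rfloor+1)$, and consequently some $I^* \subseteq S$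
takes care of at least $0.02\, n/(\lfloor\log_2 k\rfloor+1)$ vertices. -/
theorem random_independent_subset_step {V : Type} [Fintype V] [DecidableEq V]
    (G : SimpleGraph V) [DecidableRel G.Adj] (k : ℕ) (hk : 2 ≤ k)
    (hfree : K1kFree G k) (S : Finset V)
    (hind : ∀ u ∈ S, ∀ v ∈ S, ¬ G.Adj u v)
    (hmaximal : ∀ v : V, v ∉ S → ∃ u ∈ S, G.Adj v u) :
    (∀ w : V, w ∉ S →
      (0.02 : ℝ) / (Nat.log 2 k + 1) ≤
        (1 / (Nat.log 2 k + 1 : ℝ)) *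
          ∑ i ∈ Finset.range (Nat.log 2 k + 1),
            ∑ s ∈ G.neighborFinset w ∩ S,
              (2 : ℝ)⁻¹ ^ i * ∏ y ∈ (G.neighborFinset w ∩ S).erase s, (1 - (2 : ℝ)⁻¹ ^ i)) ∧
    ((1 : ℝ) / (Nat.log 2 k + 1 : ℝ) ≤
      (1 / (Nat.log 2 k + 1 : ℝ)) *
        ∑ i ∈ Finset.range (Nat.log 2 k + 1), (2 : ℝ)⁻¹ ^ i) ∧
    (∃ I ⊆ S, (0.02 : ℝ) * Fintype.card V / (Nat.log 2 k + 1) ≤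
      ((Finset.univ.filter
        (fun x : V => x ∈ I ∨ (G.neighborFinset x ∩ I).card = 1)).card : ℝ)) :=
  random_independent_subset_step_general G k hfree S hind hmaximal
end

section
/- Let m, ℓ, r be positive integers with r ≤ m ≤ ℓr and m ≥ 2·log₂(4Γ) for some Γ ≥ 1. Color each of m vertices independently and uniformly at random with one of ⌈e·ℓ·r⌉ colors. Then the probability that at most m/2 distinct colors are used is at most (1/2)^{m/2} ≤ 1/(4Γ). -/
open Finset

lemma count_few_colors (m N : ℕ) (hkN : m / 2 ≤ N) :
    (Finset.univ.filter (fun f : Fin m → Fin N =>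
        2 * (Finset.univ.image f).card ≤ m)).card ≤ N.choose (m / 2) * (m / 2) ^ m := by
  set k := m / 2 with hk
  have hsub : (univ.filter (fun f : Fin m → Fin N => 2 * (univ.image f).card ≤ m)) ⊆
      (univ.powersetCard k).biUnion (fun S => Fintype.piFinset (fun _ : Fin m => S)) := by
    intro f hf
    simp only [mem_filter, mem_univ, true_and] at hf
    obtain ⟨S, hS1, _hS2, hS3⟩ := exists_subsuperset_card_eq (n := k)
      (subset_univ (univ.image f)) (by omega) (by simpa using hkN)
    refine mem_biUnion.2 ⟨S, ?_, ?_⟩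
    · simpa [mem_powersetCard] using hS3
    · exact Fintype.mem_piFinset.2 fun i => hS1 (mem_image_of_mem f (mem_univ i))
  calc _ ≤ ∑ S ∈ univ.powersetCard k, (Fintype.piFinset (fun _ : Fin m => S)).card :=
        (card_le_card hsub).trans (card_biUnion_le)
    _ = ∑ S ∈ univ.powersetCard k, S.card ^ m := by
        refine Finset.sum_congr rfl fun S _ => ?_
        rw [Fintype.card_piFinset]; simp
    _ = N.choose k * k ^ m := by
        rw [Finset.sum_congr rfl (fun S hS => by rw [(mem_powersetCard.1 hS).2]),
          Finset.sum_const, card_powersetCard, card_univ, Fintype.card_fin, smul_eq_mul]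

theorem random_coloring_few_colors_prob (m ℓ r Γ : ℕ)
    (hr : 1 ≤ r) (hℓ : 1 ≤ ℓ) (hΓ : 1 ≤ Γ)
    (h1 : r ≤ m) (h2 : m ≤ ℓ * r)
    (h3 : 2 * Real.logb 2 (4 * Γ) ≤ (m : ℝ)) :
    ((Finset.univ.filter (fun f : Fin m → Fin ⌈Real.exp 1 * ℓ * r⌉₊ =>
        2 * (Finset.univ.image f).card ≤ m)).card : ℝ) /
        ((⌈Real.exp 1 * ℓ * r⌉₊ : ℝ) ^ m) ≤ (1 / 2 : ℝ) ^ ((m : ℝ) / 2) ∧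
    (1 / 2 : ℝ) ^ ((m : ℝ) / 2) ≤ 1 / (4 * Γ) := by
  have he1 : (1 : ℝ) ≤ Real.exp 1 := by
    have := Real.add_one_le_exp (1 : ℝ); linarith
  set N : ℕ := ⌈Real.exp 1 * ℓ * r⌉₊ with hNdef
  set k : ℕ := m / 2 with hk
  have hlr1 : 1 ≤ ℓ * r := Nat.one_le_iff_ne_zero.2 (by positivity)
  have hNr : (Real.exp 1 * ℓ * r : ℝ) ≤ (N : ℝ) := Nat.le_ceil _
  have hlrN : (ℓ * r : ℕ) ≤ N := by
    have hl1 : (1 : ℝ) ≤ (ℓ : ℝ) := by exact_mod_cast hℓ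
    have hr1 : (1 : ℝ) ≤ (r : ℝ) := by exact_mod_cast hr
    have h' : ((ℓ * r : ℕ) : ℝ) ≤ (N : ℝ) := by
      push_cast
      nlinarith
    exact_mod_cast h'
  have hkN : k ≤ N := le_trans (by omega) hlrN
  have hNpos : (0 : ℝ) < (N : ℝ) := by
    have : 1 ≤ N := le_trans hlr1 hlrN
    exact_mod_cast Nat.lt_of_lt_of_le Nat.zero_lt_one this
  have hNm : (0 : ℝ) < (N : ℝ) ^ m := by positivity
  constructor
  · -- main bound
    have hchoose : (N.choose k : ℝ) * ((Nat.factorial k) : ℝ) ≤ (N : ℝ) ^ k := by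
      have h' : (Nat.factorial k) * N.choose k ≤ N ^ k := by
        rw [← Nat.descFactorial_eq_factorial_mul_choose]
        exact Nat.descFactorial_le_pow N k
      calc (N.choose k : ℝ) * ((Nat.factorial k) : ℝ) = (((Nat.factorial k) * N.choose k : ℕ) : ℝ) := by push_cast; ring
        _ ≤ ((N ^ k : ℕ) : ℝ) := Nat.cast_le.2 h'
        _ = (N : ℝ) ^ k := by push_cast; ring
    have hfacpos : (0 : ℝ) < ((Nat.factorial k) : ℝ) := by exact_mod_cast Nat.factorial_pos k
    have hchoose' : (N.choose k : ℝ) ≤ (N : ℝ) ^ k / ((Nat.factorial k) : ℝ) :=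
      (le_div_iff₀ hfacpos).2 hchoose
    have hfac : ((k : ℝ)) ^ k / ((Nat.factorial k) : ℝ) ≤ (Real.exp 1) ^ k := by
      have := Real.pow_div_factorial_le_exp (x := (k : ℝ)) (Nat.cast_nonneg k) k
      rwa [show Real.exp (k : ℝ) = Real.exp 1 ^ k by
        rw [← Real.exp_nat_mul, mul_one]] at this
    have hek : Real.exp 1 * k ≤ (N : ℝ) / 2 := by
      rw [le_div_iff₀ (by norm_num : (0:ℝ) < 2)]
      have h2k : ((2 * k : ℕ) : ℝ) ≤ ((ℓ * r : ℕ) : ℝ) := Nat.cast_le.2 (by omega)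
      push_cast at h2k
      nlinarith [Real.exp_pos (1 : ℝ)]
    have hkhalf : (k : ℝ) ≤ (N : ℝ) / 2 := by
      nlinarith [Nat.cast_nonneg (α := ℝ) k]
    have hkpow : (k : ℝ) ^ m = (k : ℝ) ^ k * ((k : ℝ) ^ k * (k : ℝ) ^ (m - 2 * k)) := by
      rw [← pow_add, ← pow_add]; congr 1; omega
    have main : ((univ.filter (fun f : Fin m → Fin N =>
        2 * (univ.image f).card ≤ m)).card : ℝ) / ((N : ℝ) ^ m) ≤ (1 / 2 : ℝ) ^ (m - k) := by
      rw [div_le_iff₀ hNm]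
      have hcount := count_few_colors m N hkN
      calc ((univ.filter (fun f : Fin m → Fin N =>
              2 * (univ.image f).card ≤ m)).card : ℝ)
          ≤ ((N.choose k * k ^ m : ℕ) : ℝ) := Nat.cast_le.2 hcount
        _ = (N.choose k : ℝ) * (k : ℝ) ^ m := by push_cast; ring
        _ ≤ ((N : ℝ) ^ k / ((Nat.factorial k) : ℝ)) * ((k : ℝ) ^ k * ((k : ℝ) ^ k * (k : ℝ) ^ (m - 2 * k))) := by
            rw [hkpow]
            exact mul_le_mul_of_nonneg_right hchoose' (by positivity)
        _ = ((k : ℝ) ^ k / ((Nat.factorial k) : ℝ)) * ((N : ℝ) ^ k * ((k : ℝ) ^ k * (k : ℝ) ^ (m - 2 * k))) := by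
            ring
        _ ≤ (Real.exp 1) ^ k * ((N : ℝ) ^ k * ((k : ℝ) ^ k * (k : ℝ) ^ (m - 2 * k))) := by
            exact mul_le_mul_of_nonneg_right hfac (by positivity)
        _ = (N : ℝ) ^ k * ((Real.exp 1 * k) ^ k * (k : ℝ) ^ (m - 2 * k)) := by
            rw [mul_pow]; ring
        _ ≤ (N : ℝ) ^ k * (((N : ℝ) / 2) ^ k * ((N : ℝ) / 2) ^ (m - 2 * k)) := by
            gcongr
        _ = (1 / 2 : ℝ) ^ (m - k) * (N : ℝ) ^ m := by
            have h1' : ((N : ℝ) / 2) ^ k * ((N : ℝ) / 2) ^ (m - 2 * k)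
                = ((N : ℝ) / 2) ^ (m - k) := by rw [← pow_add]; congr 1; omega
            have h2' : (N : ℝ) ^ k * (N : ℝ) ^ (m - k) = (N : ℝ) ^ m := by
              rw [← pow_add]; congr 1; omega
            rw [h1', ← h2', div_pow, one_div, inv_pow]
            ring
    refine main.trans ?_
    rw [← Real.rpow_natCast (1 / 2 : ℝ) (m - k)]
    apply Real.rpow_le_rpow_of_exponent_ge (by norm_num) (by norm_num)
    have hkm : ((m - k : ℕ) : ℝ) = (m : ℝ) - (k : ℝ) := by
      have : k ≤ m := by omega
      push_cast [this]; ring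
    have hkle : (k : ℝ) ≤ (m : ℝ) / 2 := by
      have : ((2 * k : ℕ) : ℝ) ≤ (m : ℝ) := Nat.cast_le.2 (by omega)
      push_cast at this; linarith
    rw [hkm]; linarith
  · -- (1/2)^(m/2) ≤ 1/(4Γ)
    have h4Γ : (0 : ℝ) < 4 * Γ := by positivity
    have hlog : Real.logb 2 (4 * Γ) ≤ (m : ℝ) / 2 := by linarith
    have key : (4 * Γ : ℝ) ≤ (2 : ℝ) ^ ((m : ℝ) / 2) := by
      calc (4 * Γ : ℝ) = (2 : ℝ) ^ (Real.logb 2 (4 * Γ)) :=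
            (Real.rpow_logb (by norm_num) (by norm_num) h4Γ).symm
        _ ≤ (2 : ℝ) ^ ((m : ℝ) / 2) :=
            Real.rpow_le_rpow_of_exponent_le (by norm_num) hlog
    rw [show (1 / 2 : ℝ) = 2⁻¹ by norm_num, Real.inv_rpow (by norm_num), one_div]
    exact inv_anti₀ h4Γ key
end
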